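/- arXiv:1212.1695 — 9 statements merged into one kernel-verified Lean document; each statement's English description precedes it below -/
import Mathlib

section
/- (Reverse triangle inequality, Lemma 1.) Let 0 < p̲ ≤ p(x) ≤ p̄ < 1 and let f, g ∈ L_{p(x),ω}(Ω) with 0 < ‖f‖_{p,ω,Ω} < ∞ and 0 < ‖g‖_{p,ω,Ω} < ∞. Then ‖ |f| + |g| ‖_{p,ω,Ω} ≥ ‖f‖_{p,ω,Ω} + ‖g‖_{p,ω,Ω}. -/
open MeasureTheory ENNReal Set Filter

/-- The modular `I_{p,ω}(f) = ∫_Ω (|f(x)| ω(x))^{p(x)} dx` (valued in `[0,∞]`). -/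
noncomputable def Ipw {n : ℕ} (Ω : Set (Fin n → ℝ)) (p ω : (Fin n → ℝ) → ℝ)
    (f : (Fin n → ℝ) → ℝ) : ℝ≥0∞ :=
  ∫⁻ x in Ω, ENNReal.ofReal (|f x| * ω x) ^ p x

/-- The quasi-norm `‖f‖_{p,ω,Ω} = inf {λ > 0 : ∫_Ω (|f(x)| ω(x)/λ)^{p(x)} dx ≤ 1}`. -/
noncomputable def Npw {n : ℕ} (Ω : Set (Fin n → ℝ)) (p ω : (Fin n → ℝ) → ℝ)
    (f : (Fin n → ℝ) → ℝ) : ℝ≥0∞ :=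
  sInf {lam : ℝ≥0∞ | 0 < lam ∧
    ∫⁻ x in Ω, (ENNReal.ofReal (|f x| * ω x) / lam) ^ p x ≤ 1}

/-!
If `λ < ‖f‖ + ‖g‖`, split `λ = λ_f + λ_g` with `λ_f < ‖f‖` and `λ_g < ‖g‖`, so that the modulars of
`f / λ_f` and `g / λ_g` both exceed `1`. Since `t ↦ t ^ p(x)` is concave, the modular of
`(|f| + |g|) / λ` dominates the convex combination, with weights `λ_f / λ` and `λ_g / λ`, of these
two modulars, hence exceeds `1` as well, and `λ` is not admissible for `|f| + |g|`.
-/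

namespace ENNReal

theorem arith_mean2_rpow_le_rpow_arith_mean (w₁ w₂ u v : ℝ≥0∞) (hw : w₁ + w₂ = 1) {q : ℝ}
    (hq₀ : 0 < q) (hq₁ : q ≤ 1) :
    w₁ * u ^ q + w₂ * v ^ q ≤ (w₁ * u + w₂ * v) ^ q := by
  -- convexity of `t ↦ t ^ q⁻¹`, applied to `u ^ q` and `v ^ q`
  have h := rpow_arith_mean_le_arith_mean2_rpow w₁ w₂ (u ^ q) (v ^ q) hw
    ((one_le_inv₀ hq₀).2 hq₁)
  rwa [← rpow_mul, ← rpow_mul, mul_inv_cancel₀ hq₀.ne', rpow_one, rpow_one,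
    rpow_inv_le_iff hq₀] at h

theorem mul_div_rpow_add_mul_div_rpow_le {a b : ℝ≥0∞} (ha₀ : a ≠ 0) (ha : a ≠ ∞) (hb₀ : b ≠ 0)
    (hb : b ≠ ∞) (u v : ℝ≥0∞) {q : ℝ} (hq₀ : 0 < q) (hq₁ : q ≤ 1) :
    a / (a + b) * (u / a) ^ q + b / (a + b) * (v / b) ^ q ≤ ((u + v) / (a + b)) ^ q := by
  have hw : a / (a + b) + b / (a + b) = 1 := by
    rw [ENNReal.div_add_div_same, ENNReal.div_self (by simp [ha₀]) (add_ne_top.2 ⟨ha, hb⟩)]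
  have hrescale : ∀ c ≠ 0, c ≠ ∞ → ∀ w, c / (a + b) * (w / c) = w / (a + b) := by
    intro c hc₀ hc w
    rw [mul_comm, ← mul_div_assoc, ENNReal.div_mul_cancel hc₀ hc]
  have := arith_mean2_rpow_le_rpow_arith_mean _ _ (u / a) (v / b) hw hq₀ hq₁
  rwa [hrescale a ha₀ ha, hrescale b hb₀ hb, ENNReal.div_add_div_same] at this

theorem ofReal_add_mul {x y : ℝ} (hx : 0 ≤ x) (hy : 0 ≤ y) (c : ℝ) :
    ENNReal.ofReal ((x + y) * c) = ENNReal.ofReal (x * c) + ENNReal.ofReal (y * c) := by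
  rcases le_total 0 c with hc | hc
  · rw [add_mul, ofReal_add (mul_nonneg hx hc) (mul_nonneg hy hc)]
  · simp [ofReal_of_nonpos, mul_nonpos_of_nonneg_of_nonpos, hx, hy, hc, add_nonneg]

theorem exists_add_eq_of_lt_add {a b c : ℝ≥0∞} (ha₀ : a ≠ 0) (ha : a ≠ ∞) (hb₀ : b ≠ 0)
    (hb : b ≠ ∞) (hc₀ : c ≠ 0) (hc : c < a + b) :
    ∃ a' b', a' ≠ 0 ∧ a' < a ∧ b' ≠ 0 ∧ b' < b ∧ a' + b' = c := by
  have hab₀ : a + b ≠ 0 := by simp [ha₀]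
  have hab : a + b ≠ ∞ := add_ne_top.2 ⟨ha, hb⟩
  set t := c / (a + b)
  have ht₀ : t ≠ 0 := by simp [t, hc₀, hab]
  have ht : t < 1 := (ENNReal.div_lt_iff (.inl hab₀) (.inl hab)).2 (by rwa [one_mul])
  refine ⟨a * t, b * t, mul_ne_zero ha₀ ht₀, ?_, mul_ne_zero hb₀ ht₀, ?_, ?_⟩
  · simpa using ENNReal.mul_lt_mul_right ha₀ ha ht
  · simpa using ENNReal.mul_lt_mul_right hb₀ hb ht
  · rw [← add_mul, ENNReal.mul_div_cancel hab₀ hab]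

end ENNReal

theorem one_lt_lintegral_rpow_div_add {α : Type*} [MeasurableSpace α] {μ : Measure α}
    {p : α → ℝ} (hp : ∀ᵐ x ∂μ, 0 < p x ∧ p x ≤ 1) {u v : α → ℝ≥0∞} {a b : ℝ≥0∞}
    (ha₀ : a ≠ 0) (ha : a ≠ ∞) (hb₀ : b ≠ 0) (hb : b ≠ ∞)
    (hu : 1 < ∫⁻ x, (u x / a) ^ p x ∂μ) (hv : 1 < ∫⁻ x, (v x / b) ^ p x ∂μ) :
    1 < ∫⁻ x, ((u x + v x) / (a + b)) ^ p x ∂μ := by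
  set w₁ := a / (a + b)
  set w₂ := b / (a + b)
  have hab₀ : a + b ≠ 0 := by simp [ha₀]
  have hab : a + b ≠ ∞ := add_ne_top.2 ⟨ha, hb⟩
  have hw₁₀ : w₁ ≠ 0 := by simp [w₁, ha₀, hab]
  have hw₂₀ : w₂ ≠ 0 := by simp [w₂, hb₀, hab]
  have hw₁ : w₁ ≠ ∞ := ENNReal.div_ne_top ha hab₀
  have hw₂ : w₂ ≠ ∞ := ENNReal.div_ne_top hb hab₀
  calc 1 = w₁ * 1 + w₂ * 1 := by
        rw [mul_one, mul_one, ENNReal.div_add_div_same, ENNReal.div_self hab₀ hab]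
    _ < w₁ * ∫⁻ x, (u x / a) ^ p x ∂μ + w₂ * ∫⁻ x, (v x / b) ^ p x ∂μ :=
        ENNReal.add_lt_add (ENNReal.mul_lt_mul_right hw₁₀ hw₁ hu)
          (ENNReal.mul_lt_mul_right hw₂₀ hw₂ hv)
    _ ≤ ∫⁻ x, w₁ * (u x / a) ^ p x ∂μ + ∫⁻ x, w₂ * (v x / b) ^ p x ∂μ :=
        add_le_add (lintegral_const_mul_le _ _) (lintegral_const_mul_le _ _)
    _ ≤ ∫⁻ x, (w₁ * (u x / a) ^ p x + w₂ * (v x / b) ^ p x) ∂μ := le_lintegral_add _ _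
    _ ≤ ∫⁻ x, ((u x + v x) / (a + b)) ^ p x ∂μ := lintegral_mono_ae <| hp.mono fun x hx =>
        mul_div_rpow_add_mul_div_rpow_le ha₀ ha hb₀ hb _ _ hx.1 hx.2

theorem one_lt_lintegral_of_lt_Npw {n : ℕ} {Ω : Set (Fin n → ℝ)} {p ω f : (Fin n → ℝ) → ℝ}
    {lam : ℝ≥0∞} (hlam₀ : lam ≠ 0) (hlam : lam < Npw Ω p ω f) :
    1 < ∫⁻ x in Ω, (ENNReal.ofReal (|f x| * ω x) / lam) ^ p x := by
  by_contra! h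
  exact (sInf_le ⟨pos_iff_ne_zero.2 hlam₀, h⟩ : Npw Ω p ω f ≤ lam).not_gt hlam

theorem reverse_triangle_inequality_general
    {n : ℕ} (Ω : Set (Fin n → ℝ))
    (p ω : (Fin n → ℝ) → ℝ)
    (hpl : 0 < essInf p (volume.restrict Ω))
    (hpu : essSup p (volume.restrict Ω) < 1)
    (hpb : ∀ᵐ x ∂(volume.restrict Ω),
      essInf p (volume.restrict Ω) ≤ p x ∧ p x ≤ essSup p (volume.restrict Ω))
    (f g : (Fin n → ℝ) → ℝ)
    (hf0 : 0 < Npw Ω p ω f) (hf1 : Npw Ω p ω f < ∞)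
    (hg0 : 0 < Npw Ω p ω g) (hg1 : Npw Ω p ω g < ∞) :
    Npw Ω p ω f + Npw Ω p ω g ≤ Npw Ω p ω (fun x => |f x| + |g x|) := by
  have hp : ∀ᵐ x ∂(volume.restrict Ω), 0 < p x ∧ p x ≤ 1 :=
    hpb.mono fun x hx => ⟨hpl.trans_le hx.1, (hx.2.trans_lt hpu).le⟩
  refine le_sInf fun lam ⟨hlam₀, hlam⟩ => not_lt.1 fun hlt => hlam.not_gt ?_
  obtain ⟨a, b, ha₀, ha, hb₀, hb, rfl⟩ :=
    exists_add_eq_of_lt_add hf0.ne' hf1.ne hg0.ne' hg1.ne hlam₀.ne' hlt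
  have hmodular := one_lt_lintegral_rpow_div_add hp ha₀ (ha.trans hf1).ne hb₀ (hb.trans hg1).ne
    (one_lt_lintegral_of_lt_Npw ha₀ ha) (one_lt_lintegral_of_lt_Npw hb₀ hb)
  have hsplit : ∀ x, ENNReal.ofReal (|(|f x| + |g x|)| * ω x) =
      ENNReal.ofReal (|f x| * ω x) + ENNReal.ofReal (|g x| * ω x) := fun x => by
    rw [abs_of_nonneg (by positivity), ofReal_add_mul (abs_nonneg _) (abs_nonneg _)]
  simpa only [hsplit] using hmodular

/-- Reverse triangle inequality (Lemma 1):
`‖|f| + |g|‖_{p,ω,Ω} ≥ ‖f‖_{p,ω,Ω} + ‖g‖_{p,ω,Ω}` for `0 < p(x) < 1`. -/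
theorem reverse_triangle_inequality
    {n : ℕ} (Ω : Set (Fin n → ℝ)) (hΩ : MeasurableSet Ω)
    (p ω : (Fin n → ℝ) → ℝ) (hp : Measurable p) (hω : Measurable ω)
    (hpl : 0 < essInf p (volume.restrict Ω))
    (hpu : essSup p (volume.restrict Ω) < 1)
    (hpb : ∀ᵐ x ∂(volume.restrict Ω),
      essInf p (volume.restrict Ω) ≤ p x ∧ p x ≤ essSup p (volume.restrict Ω))
    (hωpos : ∀ᵐ x ∂(volume.restrict Ω), 0 < ω x)
    (f g : (Fin n → ℝ) → ℝ) (hf : Measurable f) (hg : Measurable g)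
    (hfL : Ipw Ω p ω f < ∞) (hgL : Ipw Ω p ω g < ∞)
    (hf0 : 0 < Npw Ω p ω f) (hf1 : Npw Ω p ω f < ∞)
    (hg0 : 0 < Npw Ω p ω g) (hg1 : Npw Ω p ω g < ∞) :
    Npw Ω p ω f + Npw Ω p ω g ≤ Npw Ω p ω (fun x => |f x| + |g x|) :=
  reverse_triangle_inequality_general Ω p ω hpl hpu hpb f g hf0 hf1 hg0 hg1
end

section
/- (Non-local-convexity computation, Lemma 4.) Let ε > 0, m ≥ 1, and let A₁, …, A_m ⊆ Ω be pairwise disjoint measurable sets with 0 < ω(A_k) := ∫_{A_k} ω(x)^{p(x)} dx < ∞ for each k. Define f_k(x) = (ε/ω(A_k))^{1/p(x)} χ_{A_k}(x) and g_m = (1/m) ∑_{k=1}^m f_k. Then I_{p,ω}(f_k) = ε for every k = 1, …, m, while I_{p,ω}(g_m) ≥ m^{1 − p̄} ε. -/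
open MeasureTheory ENNReal Set Filter

/-! On `A_k` one has `((ε / ω(A_k))^{1/p} ω)^p = (ε / ω(A_k)) ω^p`, so integrating over `A_k`
gives `I(f_k) = ε`. The modular is additive over disjoint supports, so `I(∑ f_k) = m ε`, and
since `1/m ≤ 1` and `p ≤ p̄`, pulling out the factor `1/m` costs at most `(1/m)^{p̄}`:
`I(g_m) ≥ m^{-p̄} · m ε`. -/

lemma ENNReal.ofReal_rpow_one_div_mul_rpow {c w q : ℝ} (hc : 0 ≤ c) (hw : 0 ≤ w) (hq : 0 < q) :
    ENNReal.ofReal (c ^ (1 / q) * w) ^ q = ENNReal.ofReal c * ENNReal.ofReal (w ^ q) := by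
  rw [ENNReal.ofReal_rpow_of_nonneg (by positivity) hq.le,
    Real.mul_rpow (by positivity) hw, one_div, Real.rpow_inv_rpow hc hq.ne',
    ENNReal.ofReal_mul hc]

lemma Finset.sum_indicator_apply_of_mem {ι α M : Type*} [AddCommMonoid M]
    [Fintype ι] {A : ι → Set α} (hA : Pairwise (Function.onFun Disjoint A)) (F : ι → α → M)
    {k : ι} {x : α} (hx : x ∈ A k) :
    ∑ j, (A j).indicator (F j) x = F k x := by
  rw [Finset.sum_eq_single_of_mem k (Finset.mem_univ k), indicator_of_mem hx]
  intro j _ hjk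
  exact indicator_of_notMem (fun hxj => Set.disjoint_left.mp (hA hjk) hxj hx) _

section Modular

variable {n : ℕ} {Ω : Set (Fin n → ℝ)} {p ω : (Fin n → ℝ) → ℝ}

/-- As `0 ^ 0 = 1` in `ℝ≥0∞`, it is the positivity of `p` that kills the integrand off `B`. -/
lemma Ipw_eq_setLIntegral {B : Set (Fin n → ℝ)} (hB : MeasurableSet B)
    (hp : ∀ᵐ x ∂volume.restrict Ω, 0 < p x) {f : (Fin n → ℝ) → ℝ} (hf : ∀ x ∉ B, f x = 0) :
    Ipw Ω p ω f = ∫⁻ x in B, ENNReal.ofReal (|f x| * ω x) ^ p x ∂volume.restrict Ω := by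
  rw [← lintegral_indicator hB, Ipw]
  refine lintegral_congr_ae ?_
  filter_upwards [hp] with x hpx
  by_cases hx : x ∈ B
  · rw [indicator_of_mem hx]
  · rw [indicator_of_notMem hx, hf x hx, abs_zero, zero_mul, ENNReal.ofReal_zero,
      ENNReal.zero_rpow_of_pos hpx]

lemma Ipw_indicator_rpow_one_div {A : Set (Fin n → ℝ)} (hA : MeasurableSet A) (hAΩ : A ⊆ Ω)
    (hp : ∀ᵐ x ∂volume.restrict Ω, 0 < p x) (hω : ∀ᵐ x ∂volume.restrict Ω, 0 ≤ ω x)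
    {c : ℝ} (hc : 0 ≤ c) :
    Ipw Ω p ω (A.indicator fun y => c ^ (1 / p y)) =
      ENNReal.ofReal c * ∫⁻ x in A, ENNReal.ofReal (ω x ^ p x) := by
  rw [Ipw_eq_setLIntegral hA hp fun x hx => indicator_of_notMem hx _,
    Measure.restrict_restrict hA, inter_eq_left.mpr hAΩ, ← lintegral_const_mul' _ _ ofReal_ne_top]
  refine lintegral_congr_ae ?_
  filter_upwards [ae_restrict_of_ae_restrict_of_subset hAΩ hp,
    ae_restrict_of_ae_restrict_of_subset hAΩ hω, ae_restrict_mem hA] with x hpx hωx hxA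
  rw [indicator_of_mem hxA, abs_of_nonneg (by positivity),
    ENNReal.ofReal_rpow_one_div_mul_rpow hc hωx hpx]

lemma Ipw_sum_indicator {ι : Type*} [Fintype ι] {A : ι → Set (Fin n → ℝ)}
    (hA : ∀ k, MeasurableSet (A k)) (hAd : Pairwise (Function.onFun Disjoint A))
    (hp : ∀ᵐ x ∂volume.restrict Ω, 0 < p x) (F : ι → (Fin n → ℝ) → ℝ) :
    Ipw Ω p ω (fun x => ∑ k, (A k).indicator (F k) x) =
      ∑ k, Ipw Ω p ω ((A k).indicator (F k)) := by
  have hsupp : ∀ x ∉ ⋃ k, A k, ∑ k, (A k).indicator (F k) x = 0 := fun x hx =>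
    Finset.sum_eq_zero fun k _ => indicator_of_notMem (fun hxk => hx (mem_iUnion_of_mem k hxk)) _
  rw [Ipw_eq_setLIntegral (MeasurableSet.iUnion hA) hp hsupp, lintegral_iUnion hA hAd,
    tsum_fintype]
  refine Finset.sum_congr rfl fun k _ => ?_
  rw [Ipw_eq_setLIntegral (hA k) hp fun x hx => indicator_of_notMem hx _]
  refine setLIntegral_congr_fun (hA k) fun x hxk => ?_
  rw [Finset.sum_indicator_apply_of_mem hAd F hxk, indicator_of_mem hxk]

lemma rpow_mul_Ipw_le_Ipw_const_mul {Q d : ℝ} (hd : 0 < d) (hd1 : d ≤ 1)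
    (hp : ∀ᵐ x ∂volume.restrict Ω, 0 ≤ p x ∧ p x ≤ Q) (f : (Fin n → ℝ) → ℝ) :
    ENNReal.ofReal (d ^ Q) * Ipw Ω p ω f ≤ Ipw Ω p ω (fun x => d * f x) := by
  rw [Ipw, Ipw, ← lintegral_const_mul' _ _ ofReal_ne_top]
  refine lintegral_mono_ae ?_
  filter_upwards [hp] with x ⟨hp0, hpQ⟩
  rw [abs_mul, abs_of_pos hd, mul_assoc, ENNReal.ofReal_mul hd.le,
    ENNReal.mul_rpow_of_nonneg _ _ hp0, ENNReal.ofReal_rpow_of_nonneg hd.le hp0]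
  exact mul_le_mul_left (ofReal_le_ofReal (Real.rpow_le_rpow_of_exponent_ge hd hd1 hpQ)) _

end Modular

theorem not_locally_convex_computation_general
    {n : ℕ} (Ω : Set (Fin n → ℝ))
    (p ω : (Fin n → ℝ) → ℝ)
    (hpl : 0 < essInf p (volume.restrict Ω))
    (hpb : ∀ᵐ x ∂(volume.restrict Ω),
      essInf p (volume.restrict Ω) ≤ p x ∧ p x ≤ essSup p (volume.restrict Ω))
    (hωpos : ∀ᵐ x ∂(volume.restrict Ω), 0 < ω x)
    (m : ℕ) (hm : 1 ≤ m) (ε : ℝ) (hε : 0 < ε)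
    (A : Fin m → Set (Fin n → ℝ))
    (hAmeas : ∀ k, MeasurableSet (A k)) (hAsub : ∀ k, A k ⊆ Ω)
    (hAdisj : Pairwise (Function.onFun Disjoint A))
    (ωA : Fin m → ℝ) (hωApos : ∀ k, 0 < ωA k)
    (hωA : ∀ k, ENNReal.ofReal (ωA k) = ∫⁻ x in A k, ENNReal.ofReal (ω x ^ p x)) :
    (∀ k, Ipw Ω p ω
        (fun x => Set.indicator (A k) (fun y => (ε / ωA k) ^ (1 / p y)) x) =
      ENNReal.ofReal ε) ∧
    ENNReal.ofReal ((m : ℝ) ^ ((1 : ℝ) - essSup p (volume.restrict Ω)) * ε) ≤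
      Ipw Ω p ω (fun x => (1 / (m : ℝ)) *
        ∑ k : Fin m, Set.indicator (A k) (fun y => (ε / ωA k) ^ (1 / p y)) x) := by
  set Q := essSup p (volume.restrict Ω)
  have hp : ∀ᵐ x ∂volume.restrict Ω, 0 < p x := hpb.mono fun x hx => hpl.trans_le hx.1
  have hm0 : (0 : ℝ) < m := by exact_mod_cast hm
  have hf : ∀ k, Ipw Ω p ω ((A k).indicator fun y => (ε / ωA k) ^ (1 / p y)) =
      ENNReal.ofReal ε := fun k => by
    rw [Ipw_indicator_rpow_one_div (hAmeas k) (hAsub k) hp (hωpos.mono fun x hx => hx.le)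
      (div_pos hε (hωApos k)).le, ← hωA k, ← ENNReal.ofReal_mul (div_pos hε (hωApos k)).le,
      div_mul_cancel₀ _ (hωApos k).ne']
  refine ⟨hf, ?_⟩
  calc ENNReal.ofReal ((m : ℝ) ^ ((1 : ℝ) - Q) * ε)
      = ENNReal.ofReal ((1 / (m : ℝ)) ^ Q) * (m * ENNReal.ofReal ε) := by
        rw [← ENNReal.ofReal_natCast, ← ENNReal.ofReal_mul hm0.le,
          ← ENNReal.ofReal_mul (by positivity), one_div, Real.inv_rpow hm0.le,
          Real.rpow_sub hm0, Real.rpow_one]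
        ring_nf
    _ = ENNReal.ofReal ((1 / (m : ℝ)) ^ Q) *
          Ipw Ω p ω (fun x => ∑ k, (A k).indicator (fun y => (ε / ωA k) ^ (1 / p y)) x) := by
        rw [Ipw_sum_indicator hAmeas hAdisj hp, Finset.sum_congr rfl fun k _ => hf k,
          Finset.sum_const, Finset.card_univ, Fintype.card_fin, nsmul_eq_mul]
    _ ≤ _ := rpow_mul_Ipw_le_Ipw_const_mul (by positivity)
        (div_le_one_of_le₀ (by exact_mod_cast hm) hm0.le)
        (hpb.mono fun x hx => ⟨(hpl.trans_le hx.1).le, hx.2⟩) _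

/-- Non-local-convexity computation (Lemma 4): for disjoint sets `A₁,…,A_m` and
`f_k = (ε/ω(A_k))^{1/p(x)} χ_{A_k}`, one has `I_{p,ω}(f_k) = ε` while the
average `g_m = (1/m) ∑ f_k` satisfies `I_{p,ω}(g_m) ≥ m^{1-p̄} ε`. -/
theorem not_locally_convex_computation
    {n : ℕ} (Ω : Set (Fin n → ℝ)) (hΩ : MeasurableSet Ω)
    (p ω : (Fin n → ℝ) → ℝ) (hp : Measurable p) (hω : Measurable ω)
    (hpl : 0 < essInf p (volume.restrict Ω))
    (hpu : essSup p (volume.restrict Ω) < 1)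
    (hpb : ∀ᵐ x ∂(volume.restrict Ω),
      essInf p (volume.restrict Ω) ≤ p x ∧ p x ≤ essSup p (volume.restrict Ω))
    (hωpos : ∀ᵐ x ∂(volume.restrict Ω), 0 < ω x)
    (m : ℕ) (hm : 1 ≤ m) (ε : ℝ) (hε : 0 < ε)
    (A : Fin m → Set (Fin n → ℝ))
    (hAmeas : ∀ k, MeasurableSet (A k)) (hAsub : ∀ k, A k ⊆ Ω)
    (hAdisj : Pairwise (Function.onFun Disjoint A))
    (ωA : Fin m → ℝ) (hωApos : ∀ k, 0 < ωA k)
    (hωA : ∀ k, ENNReal.ofReal (ωA k) = ∫⁻ x in A k, ENNReal.ofReal (ω x ^ p x)) :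
    (∀ k, Ipw Ω p ω
        (fun x => Set.indicator (A k) (fun y => (ε / ωA k) ^ (1 / p y)) x) =
      ENNReal.ofReal ε) ∧
    ENNReal.ofReal ((m : ℝ) ^ ((1 : ℝ) - essSup p (volume.restrict Ω)) * ε) ≤
      Ipw Ω p ω (fun x => (1 / (m : ℝ)) *
        ∑ k : Fin m, Set.indicator (A k) (fun y => (ε / ωA k) ^ (1 / p y)) x) :=
  not_locally_convex_computation_general Ω p ω hpl hpb hωpos m hm ε hε A hAmeas hAsub hAdisj ωA
    hωApos hωA
end

section
/- (Completeness, Theorem 5.) Let (f_n)_{n ≥ 1} be a sequence in L_{p(x),ω}(Ω) such that I_{p,ω}(f_n − f_m) → 0 as n, m → ∞. Then there exists f ∈ L_{p(x),ω}(Ω) such that I_{p,ω}(f_n − f) → 0 as n → ∞; i.e., the space L_{p(x),ω}(Ω) is complete with respect to the modular metric ρ(f, g) = I_{p,ω}(f − g). -/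
open MeasureTheory ENNReal Set Filter

open Topology

/-!
For `0 < p ≤ 1` the map `t ↦ t ^ p` is subadditive on `[0, ∞]`, so the modular obeys the triangle
inequality and, more strongly, `(∑ aⱼ) ^ p ≤ ∑ aⱼ ^ p`. This makes the Riesz–Fischer argument work
without any norm: along a subsequence whose consecutive modular distances are summable, the
integral of `(ω ∑ⱼ |F_{φ(j+1)} - F_{φ j}|) ^ p` is finite, so the subsequence converges a.e. to some
`f`, and Fatou's lemma transfers the Cauchy bound from the subsequence to `f`.
-/

theorem ENNReal.rpow_tsum_le_tsum_rpow {ι : Type*} (a : ι → ℝ≥0∞) {q : ℝ} (hq₀ : 0 < q)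
    (hq₁ : q ≤ 1) : (∑' i, a i) ^ q ≤ ∑' i, a i ^ q := by
  have hsum (s : Finset ι) : (∑ i ∈ s, a i) ^ q ≤ ∑ i ∈ s, a i ^ q :=
    Finset.le_sum_of_subadditive (· ^ q) (zero_rpow_of_pos hq₀).le
      (fun x y => rpow_add_le_add_rpow x y hq₀.le hq₁) s a
  exact le_of_tendsto ((continuous_rpow_const.tendsto _).comp ENNReal.summable.hasSum)
    (Eventually.of_forall fun s => (hsum s).trans (ENNReal.sum_le_tsum s))

theorem ENNReal.ofReal_abs_add_mul_rpow_le (a b w : ℝ) {q : ℝ} (hq₀ : 0 ≤ q) (hq₁ : q ≤ 1) :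
    ENNReal.ofReal (|a + b| * w) ^ q ≤
      ENNReal.ofReal (|a| * w) ^ q + ENNReal.ofReal (|b| * w) ^ q :=
  calc ENNReal.ofReal (|a + b| * w) ^ q
      ≤ (ENNReal.ofReal (|a| * w) + ENNReal.ofReal (|b| * w)) ^ q := by
        refine rpow_le_rpow ?_ hq₀
        simp only [ofReal_mul (abs_nonneg _), ← add_mul]
        gcongr
        exact (ofReal_le_ofReal (abs_add_le a b)).trans ofReal_add_le
    _ ≤ _ := rpow_add_le_add_rpow _ _ hq₀ hq₁

theorem exists_strictMono_tsum_lt_top_of_cauchy {d : ℕ → ℕ → ℝ≥0∞}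
    (hd : ∀ ε : ℝ≥0∞, 0 < ε → ∃ N : ℕ, ∀ k l : ℕ, N ≤ k → N ≤ l → d k l < ε) :
    ∃ φ : ℕ → ℕ, StrictMono φ ∧ ∑' j, d (φ j) (φ (j + 1)) < ∞ := by
  obtain ⟨φ, hφ, hφd⟩ := extraction_forall_of_eventually'
    (P := fun j k => ∀ l ≥ k, d k l < 2⁻¹ ^ j) fun j => by
      obtain ⟨N, hN⟩ := hd (2⁻¹ ^ j) (ENNReal.pow_pos (ENNReal.inv_pos.2 ofNat_ne_top) j)
      exact ⟨N, fun k hk l hl => hN k l hk (hk.trans hl)⟩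
  refine ⟨φ, hφ, ?_⟩
  calc ∑' j, d (φ j) (φ (j + 1)) ≤ ∑' j : ℕ, (2⁻¹ : ℝ≥0∞) ^ j :=
        ENNReal.tsum_le_tsum fun j => (hφd j _ (hφ j.lt_succ_self).le).le
    _ = 2 := ENNReal.tsum_geometric_two
    _ < ∞ := ofNat_lt_top

-- `Ipw Ω p ω` unfolds to `weightedModular (volume.restrict Ω) p ω`.
noncomputable def weightedModular {α : Type*} [MeasurableSpace α] (μ : Measure α) (p ω : α → ℝ)
    (f : α → ℝ) : ℝ≥0∞ :=
  ∫⁻ x, ENNReal.ofReal (|f x| * ω x) ^ p x ∂μ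

namespace weightedModular

variable {α : Type*} [MeasurableSpace α] {μ : Measure α} {p ω : α → ℝ}

theorem sub_comm (f g : α → ℝ) :
    weightedModular μ p ω (f - g) = weightedModular μ p ω (g - f) := by
  simp only [weightedModular, Pi.sub_apply, abs_sub_comm]

variable (hp : Measurable p) (hω : Measurable ω)
include hp hω

theorem measurable_integrand {f : α → ℝ} (hf : Measurable f) :
    Measurable fun x => ENNReal.ofReal (|f x| * ω x) ^ p x :=
  (hf.abs.mul hω).ennreal_ofReal.pow hp

theorem add_le (hp01 : ∀ᵐ x ∂μ, 0 < p x ∧ p x ≤ 1) {f : α → ℝ} (hf : Measurable f)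
    (g : α → ℝ) :
    weightedModular μ p ω (f + g) ≤ weightedModular μ p ω f + weightedModular μ p ω g :=
  calc weightedModular μ p ω (f + g)
      ≤ ∫⁻ x, (ENNReal.ofReal (|f x| * ω x) ^ p x + ENNReal.ofReal (|g x| * ω x) ^ p x) ∂μ := by
        refine lintegral_mono_ae ?_
        filter_upwards [hp01] with x hx
        exact ofReal_abs_add_mul_rpow_le _ _ _ hx.1.le hx.2
    _ = _ := lintegral_add_left (measurable_integrand hp hω hf) _

theorem lt_top_of_sub_lt_top (hp01 : ∀ᵐ x ∂μ, 0 < p x ∧ p x ≤ 1) {f g : α → ℝ}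
    (hg : Measurable g) (hg_fin : weightedModular μ p ω g < ∞)
    (hgf : weightedModular μ p ω (g - f) < ∞) : weightedModular μ p ω f < ∞ :=
  calc weightedModular μ p ω f = weightedModular μ p ω (g + (f - g)) := by rw [add_sub_cancel]
    _ ≤ weightedModular μ p ω g + weightedModular μ p ω (g - f) := by
        rw [← sub_comm]; exact add_le hp hω hp01 hg _
    _ < ∞ := add_lt_top.2 ⟨hg_fin, hgf⟩

theorem le_liminf_of_ae_tendsto {G : ℕ → α → ℝ} (hG : ∀ j, Measurable (G j)) {g : α → ℝ}
    (hlim : ∀ᵐ x ∂μ, Tendsto (fun j => G j x) atTop (𝓝 (g x))) :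
    weightedModular μ p ω g ≤ liminf (fun j => weightedModular μ p ω (G j)) atTop := by
  have hpt : ∀ᵐ x ∂μ, ENNReal.ofReal (|g x| * ω x) ^ p x =
      liminf (fun j => ENNReal.ofReal (|G j x| * ω x) ^ p x) atTop := by
    filter_upwards [hlim] with x hx
    refine ((continuous_rpow_const.tendsto _).comp ?_).liminf_eq.symm
    exact (continuous_ofReal.tendsto _).comp (hx.abs.mul_const _)
  rw [weightedModular, lintegral_congr_ae hpt]
  exact lintegral_liminf_le fun j => measurable_integrand hp hω (hG j)

theorem lintegral_tsum_mul_rpow_le (hp01 : ∀ᵐ x ∂μ, 0 < p x ∧ p x ≤ 1) {G : ℕ → α → ℝ}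
    (hG : ∀ j, Measurable (G j)) :
    ∫⁻ x, ((∑' j, ENNReal.ofReal |G j x|) * ENNReal.ofReal (ω x)) ^ p x ∂μ ≤
      ∑' j, weightedModular μ p ω (G j) :=
  calc ∫⁻ x, ((∑' j, ENNReal.ofReal |G j x|) * ENNReal.ofReal (ω x)) ^ p x ∂μ
      ≤ ∫⁻ x, ∑' j, ENNReal.ofReal (|G j x| * ω x) ^ p x ∂μ := by
        refine lintegral_mono_ae ?_
        filter_upwards [hp01] with x hx
        simp only [← ENNReal.tsum_mul_right, ofReal_mul (abs_nonneg _)]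
        exact rpow_tsum_le_tsum_rpow _ hx.1 hx.2
    _ = _ := lintegral_tsum fun j => (measurable_integrand hp hω (hG j)).aemeasurable

theorem ae_summable_of_tsum_lt_top (hp01 : ∀ᵐ x ∂μ, 0 < p x ∧ p x ≤ 1)
    (hωpos : ∀ᵐ x ∂μ, 0 < ω x) {G : ℕ → α → ℝ} (hG : ∀ j, Measurable (G j))
    (hsum : ∑' j, weightedModular μ p ω (G j) < ∞) : ∀ᵐ x ∂μ, Summable fun j => |G j x| := by
  have hmeas : Measurable fun x => ((∑' j, ENNReal.ofReal |G j x|) * ENNReal.ofReal (ω x)) ^ p x :=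
    ((Measurable.tsum fun j => (hG j).abs.ennreal_ofReal).mul hω.ennreal_ofReal).pow hp
  filter_upwards [ae_lt_top hmeas ((lintegral_tsum_mul_rpow_le hp hω hp01 hG).trans_lt hsum).ne,
    hp01, hωpos] with x hx hpx hωx
  have hfin : ∑' j, ENNReal.ofReal |G j x| ≠ ∞ := by
    intro htop
    simp [htop, top_mul (ofReal_pos.2 hωx).ne', top_rpow_of_pos hpx.1] at hx
  simpa only [toReal_ofReal (abs_nonneg _)] using ENNReal.summable_toReal hfin

theorem exists_tendsto_of_cauchy (hp01 : ∀ᵐ x ∂μ, 0 < p x ∧ p x ≤ 1)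
    (hωpos : ∀ᵐ x ∂μ, 0 < ω x) {F : ℕ → α → ℝ} (hF : ∀ k, Measurable (F k))
    (hcauchy : ∀ ε : ℝ≥0∞, 0 < ε → ∃ N : ℕ, ∀ k l : ℕ, N ≤ k → N ≤ l →
      weightedModular μ p ω (F k - F l) < ε) :
    ∃ f : α → ℝ, Measurable f ∧
      Tendsto (fun k => weightedModular μ p ω (F k - f)) atTop (𝓝 0) := by
  obtain ⟨φ, hφ, hsum⟩ := exists_strictMono_tsum_lt_top_of_cauchy hcauchy
  have hconv : ∀ᵐ x ∂μ, ∃ c, Tendsto (fun j => F (φ j) x) atTop (𝓝 c) := by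
    filter_upwards [ae_summable_of_tsum_lt_top hp hω hp01 hωpos
      (fun j => (hF (φ j)).sub (hF (φ (j + 1)))) hsum] with x hx
    refine cauchySeq_tendsto_of_complete (cauchySeq_of_summable_dist ?_)
    simpa only [Real.dist_eq, Pi.sub_apply] using hx
  obtain ⟨f, hf, hlim⟩ :=
    measurable_limit_of_tendsto_metrizable_ae (fun j => (hF (φ j)).aemeasurable) hconv
  refine ⟨f, hf, ENNReal.tendsto_atTop_zero.2 fun ε hε => ?_⟩
  obtain ⟨N, hN⟩ := hcauchy ε hε
  refine ⟨N, fun k hk =>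
    (le_liminf_of_ae_tendsto hp hω (fun j => (hF k).sub (hF (φ j))) ?_).trans ?_⟩
  · filter_upwards [hlim] with x hx using tendsto_const_nhds.sub hx
  · refine liminf_le_of_frequently_le' (Eventually.frequently ?_)
    exact eventually_atTop.2 ⟨N, fun j hj => (hN k (φ j) hk (hj.trans hφ.le_apply)).le⟩

end weightedModular

theorem modular_complete_general
    {n : ℕ} (Ω : Set (Fin n → ℝ))
    (p ω : (Fin n → ℝ) → ℝ) (hp : Measurable p) (hω : Measurable ω)
    (hpl : 0 < essInf p (volume.restrict Ω))
    (hpu : essSup p (volume.restrict Ω) < 1)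
    (hpb : ∀ᵐ x ∂(volume.restrict Ω),
      essInf p (volume.restrict Ω) ≤ p x ∧ p x ≤ essSup p (volume.restrict Ω))
    (hωpos : ∀ᵐ x ∂(volume.restrict Ω), 0 < ω x)
    (F : ℕ → (Fin n → ℝ) → ℝ)
    (hF : ∀ k, Measurable (F k) ∧ Ipw Ω p ω (F k) < ∞)
    (hcauchy : ∀ ε : ℝ≥0∞, 0 < ε → ∃ N : ℕ, ∀ k l : ℕ, N ≤ k → N ≤ l →
      Ipw Ω p ω (fun x => F k x - F l x) < ε) :
    ∃ f : (Fin n → ℝ) → ℝ, Measurable f ∧ Ipw Ω p ω f < ∞ ∧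
      Tendsto (fun k => Ipw Ω p ω (fun x => F k x - f x)) atTop (nhds 0) := by
  have hp01 : ∀ᵐ x ∂(volume.restrict Ω), 0 < p x ∧ p x ≤ 1 := by
    filter_upwards [hpb] with x hx using ⟨hpl.trans_le hx.1, hx.2.trans hpu.le⟩
  obtain ⟨f, hf, hlim⟩ :=
    weightedModular.exists_tendsto_of_cauchy hp hω hp01 hωpos (fun k => (hF k).1) hcauchy
  obtain ⟨k, hk⟩ := (hlim.eventually (gt_mem_nhds one_pos)).exists
  exact ⟨f, hf, weightedModular.lt_top_of_sub_lt_top hp hω hp01 (hF k).1 (hF k).2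
    (hk.trans one_lt_top), hlim⟩

/-- Completeness (Theorem 5): `L_{p(x),ω}(Ω)` is complete with respect to the
modular metric `ρ(f,g) = I_{p,ω}(f - g)`. -/
theorem modular_complete
    {n : ℕ} (Ω : Set (Fin n → ℝ)) (hΩ : MeasurableSet Ω)
    (p ω : (Fin n → ℝ) → ℝ) (hp : Measurable p) (hω : Measurable ω)
    (hpl : 0 < essInf p (volume.restrict Ω))
    (hpu : essSup p (volume.restrict Ω) < 1)
    (hpb : ∀ᵐ x ∂(volume.restrict Ω),
      essInf p (volume.restrict Ω) ≤ p x ∧ p x ≤ essSup p (volume.restrict Ω))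
    (hωpos : ∀ᵐ x ∂(volume.restrict Ω), 0 < ω x)
    (F : ℕ → (Fin n → ℝ) → ℝ)
    (hF : ∀ k, Measurable (F k) ∧ Ipw Ω p ω (F k) < ∞)
    (hcauchy : ∀ ε : ℝ≥0∞, 0 < ε → ∃ N : ℕ, ∀ k l : ℕ, N ≤ k → N ≤ l →
      Ipw Ω p ω (fun x => F k x - F l x) < ε) :
    ∃ f : (Fin n → ℝ) → ℝ, Measurable f ∧ Ipw Ω p ω f < ∞ ∧
      Tendsto (fun k => Ipw Ω p ω (fun x => F k x - f x)) atTop (nhds 0) :=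
  modular_complete_general Ω p ω hp hω hpl hpu hpb hωpos F hF hcauchy
end

section
/- (Sequence inequality, Lemma 5, inequality (4.1).) Let (p_n)_{n ≥ 1} be a nonincreasing sequence with 0 < p̲ ≤ p_n ≤ p̄ ≤ 1 for all n and p̲ = inf_n p_n, and let (x_n)_{n ≥ 1} be a sequence of nonnegative reals such that x_n^{p_n} ≥ x_{n+1}^{p_{n+1}} for all n ∈ ℕ. Then (∑_{n=1}^∞ x_n^{p_n/p̲})^{p̲} ≤ ∑_{n=1}^∞ x_n^{p_n} [n^{p_n} − (n−1)^{p_n}] ≤ ∑_{n=1}^∞ x_n^{p_n}. -/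
/-!
For a nonincreasing nonnegative sequence `a` and `0 < p ≤ 1`, put `S = a₀ + ⋯ + a_{N-1}`. Since
`S ≥ N a_N` and the increments of the concave map `t ↦ t^p` decrease,
`(S + a_N)^p - S^p ≤ ((N+1) a_N)^p - (N a_N)^p = a_N^p ((N+1)^p - N^p)`, and summing gives
`(∑ aₙ)^p ≤ ∑ aₙ^p ((n+1)^p - n^p)`. Apply this with `p = p̲` to `aₙ = xₙ^{pₙ/p̲}`, whose `p̲`-th
powers `xₙ^{pₙ}` are nonincreasing, and use that `(n+1)^q - n^q` increases with `q` and is at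
most `1` for `q ≤ 1`.
-/

open scoped ENNReal
open Finset

theorem ConcaveOn.add_sub_le_add_sub {s : Set ℝ} {f : ℝ → ℝ} (hf : ConcaveOn ℝ s f)
    {a b c : ℝ} (ha : a ∈ s) (hbc : b + c ∈ s) (hab : a ≤ b) (hc : 0 ≤ c) :
    f (b + c) - f b ≤ f (a + c) - f a := by
  rcases (show a ≤ b + c by linarith).eq_or_lt with hd | hd
  · obtain rfl : b = a := by linarith
    rfl
  -- Both `a + c` and `b` are convex combinations of `a` and `b + c`, with swapped weights.
  set t := c / (b + c - a)
  have hd : 0 < b + c - a := by linarith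
  have ht0 : 0 ≤ t := div_nonneg hc hd.le
  have ht1 : 0 ≤ 1 - t := by
    rw [sub_nonneg, div_le_one hd]; linarith
  have hac : a + c = (1 - t) * a + t * (b + c) := by
    simp only [t]; field_simp; ring
  have hb : b = t * a + (1 - t) * (b + c) := by
    simp only [t]; field_simp; ring
  have h₁ := hf.2 ha hbc ht1 ht0 (sub_add_cancel 1 t)
  have h₂ := hf.2 ha hbc ht0 ht1 (add_sub_cancel t 1)
  simp only [smul_eq_mul, ← hac, ← hb] at h₁ h₂
  linarith

namespace Real

theorem add_rpow_sub_rpow_le_add_rpow_sub_rpow {p a b c : ℝ} (hp₀ : 0 ≤ p) (hp₁ : p ≤ 1)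
    (ha : 0 ≤ a) (hab : a ≤ b) (hc : 0 ≤ c) :
    (b + c) ^ p - b ^ p ≤ (a + c) ^ p - a ^ p :=
  (concaveOn_rpow hp₀ hp₁).add_sub_le_add_sub (f := fun t ↦ t ^ p) ha
    (show 0 ≤ b + c by linarith) hab hc

theorem rpow_sum_range_le_sum_rpow_mul_sub {p : ℝ} (hp₀ : 0 < p) (hp₁ : p ≤ 1) {a : ℕ → ℝ}
    (ha : ∀ n, 0 ≤ a n) (ha_anti : Antitone a) (N : ℕ) :
    (∑ k ∈ range N, a k) ^ p ≤ ∑ k ∈ range N, a k ^ p * (((k : ℝ) + 1) ^ p - (k : ℝ) ^ p) := by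
  induction N with
  | zero => simp [zero_rpow hp₀.ne']
  | succ N ih =>
    set S := ∑ k ∈ range N, a k
    have hNS : N * a N ≤ S := by
      simpa using sum_le_sum fun k hk ↦ ha_anti (mem_range.1 hk).le
    have hstep : (S + a N) ^ p - S ^ p ≤ a N ^ p * (((N : ℝ) + 1) ^ p - (N : ℝ) ^ p) := by
      calc (S + a N) ^ p - S ^ p ≤ (N * a N + a N) ^ p - (N * a N) ^ p :=
            add_rpow_sub_rpow_le_add_rpow_sub_rpow hp₀.le hp₁
              (mul_nonneg N.cast_nonneg (ha N)) hNS (ha N)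
        _ = a N ^ p * (((N : ℝ) + 1) ^ p - (N : ℝ) ^ p) := by
            rw [← add_one_mul, mul_rpow (by positivity) (ha N),
              mul_rpow (Nat.cast_nonneg N) (ha N)]
            ring
    rw [sum_range_succ, sum_range_succ]
    linarith

theorem natCast_add_one_rpow_sub_rpow_nonneg {q : ℝ} (hq : 0 ≤ q) (n : ℕ) :
    0 ≤ ((n : ℝ) + 1) ^ q - (n : ℝ) ^ q :=
  sub_nonneg.2 (rpow_le_rpow n.cast_nonneg (by linarith) hq)

theorem natCast_add_one_rpow_sub_rpow_le_one {q : ℝ} (hq₀ : 0 ≤ q) (hq₁ : q ≤ 1) (n : ℕ) :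
    ((n : ℝ) + 1) ^ q - (n : ℝ) ^ q ≤ 1 := by
  have := rpow_add_le_add_rpow n.cast_nonneg zero_le_one hq₀ hq₁
  rw [one_rpow] at this
  linarith

theorem natCast_add_one_rpow_sub_rpow_le_of_le {r q : ℝ} (hr : 0 < r) (hrq : r ≤ q) (n : ℕ) :
    ((n : ℝ) + 1) ^ r - (n : ℝ) ^ r ≤ ((n : ℝ) + 1) ^ q - (n : ℝ) ^ q := by
  rcases n.eq_zero_or_pos with rfl | hn
  · simp [zero_rpow hr.ne', zero_rpow (hr.trans_le hrq).ne']
  have hn : (1 : ℝ) ≤ n := by exact_mod_cast hn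
  have hsplit : ∀ t : ℝ, 0 ≤ t → t ^ q = t ^ r * t ^ (q - r) := fun t ht ↦ by
    rw [← rpow_add' ht (by linarith), add_sub_cancel]
  have hgrowth : (1 : ℝ) ≤ (n : ℝ) ^ (q - r) := one_le_rpow hn (by linarith)
  have hbase : (n : ℝ) ^ (q - r) ≤ ((n : ℝ) + 1) ^ (q - r) :=
    rpow_le_rpow (by linarith) (by linarith) (by linarith)
  have hinc := natCast_add_one_rpow_sub_rpow_nonneg hr.le n
  have hpos : 0 ≤ ((n : ℝ) + 1) ^ r := by positivity
  rw [hsplit _ (by linarith), hsplit _ (by linarith)]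
  nlinarith

theorem rpow_sum_range_rpow_div_le_sum_rpow_mul_sub {r : ℝ} (hr₀ : 0 < r) (hr₁ : r ≤ 1)
    {z q : ℕ → ℝ} (hz : ∀ n, 0 ≤ z n) (hq : ∀ n, r ≤ q n) (hanti : Antitone fun n ↦ z n ^ q n) (N : ℕ) :
    (∑ k ∈ range N, z k ^ (q k / r)) ^ r ≤
      ∑ k ∈ range N, z k ^ q k * (((k : ℝ) + 1) ^ q k - (k : ℝ) ^ q k) := by
  have hzq n : 0 ≤ z n ^ q n := rpow_nonneg (hz n) _
  have hz_eq n : z n ^ (q n / r) = (z n ^ q n) ^ r⁻¹ := by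
    rw [← rpow_mul (hz n), ← div_eq_mul_inv]
  have hy_anti : Antitone fun n ↦ z n ^ (q n / r) := fun m n hmn ↦ by
    simp only [hz_eq]
    exact rpow_le_rpow (hzq n) (hanti hmn) (inv_nonneg.2 hr₀.le)
  calc (∑ k ∈ range N, z k ^ (q k / r)) ^ r
      ≤ ∑ k ∈ range N, (z k ^ (q k / r)) ^ r * (((k : ℝ) + 1) ^ r - (k : ℝ) ^ r) :=
        rpow_sum_range_le_sum_rpow_mul_sub hr₀ hr₁ (fun n ↦ rpow_nonneg (hz n) _) hy_anti N
    _ ≤ _ := sum_le_sum fun k _ ↦ by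
        rw [hz_eq, rpow_inv_rpow (hzq k) hr₀.ne']
        exact mul_le_mul_of_nonneg_left
          (natCast_add_one_rpow_sub_rpow_le_of_le hr₀ (hq k) k) (hzq k)

end Real

theorem ENNReal.tsum_ofReal_rpow_le_of_sum_range {f g : ℕ → ℝ} {r : ℝ} (hr : 0 < r)
    (hf : ∀ n, 0 ≤ f n) (hg : ∀ n, 0 ≤ g n)
    (h : ∀ N, (∑ k ∈ range N, f k) ^ r ≤ ∑ k ∈ range N, g k) :
    (∑' n, ENNReal.ofReal (f n)) ^ r ≤ ∑' n, ENNReal.ofReal (g n) := by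
  rw [← ENNReal.le_rpow_inv_iff hr]
  refine ENNReal.tsum_le_of_sum_range_le fun N ↦ (ENNReal.le_rpow_inv_iff hr).2 ?_
  calc (∑ k ∈ range N, ENNReal.ofReal (f k)) ^ r
      = ENNReal.ofReal ((∑ k ∈ range N, f k) ^ r) := by
        rw [← ENNReal.ofReal_sum_of_nonneg fun k _ ↦ hf k,
          ENNReal.ofReal_rpow_of_nonneg (sum_nonneg fun k _ ↦ hf k) hr.le]
    _ ≤ ENNReal.ofReal (∑ k ∈ range N, g k) := ENNReal.ofReal_le_ofReal (h N)
    _ = ∑ k ∈ range N, ENNReal.ofReal (g k) := ENNReal.ofReal_sum_of_nonneg fun k _ ↦ hg k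
    _ ≤ ∑' n, ENNReal.ofReal (g n) := ENNReal.sum_le_tsum _

theorem sequence_inequality_general
    (p x : ℕ → ℝ) (pl pu : ℝ)
    (hpl : 0 < pl) (hpu : pu ≤ 1)
    (hb : ∀ n : ℕ, 1 ≤ n → pl ≤ p n ∧ p n ≤ pu)
    (hx : ∀ n : ℕ, 1 ≤ n → 0 ≤ x n)
    (hxm : ∀ n : ℕ, 1 ≤ n → x (n + 1) ^ p (n + 1) ≤ x n ^ p n) :
    (∑' n : ℕ, ENNReal.ofReal (x (n + 1) ^ (p (n + 1) / pl))) ^ pl ≤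
      (∑' n : ℕ, ENNReal.ofReal (x (n + 1) ^ p (n + 1) *
        (((n : ℝ) + 1) ^ p (n + 1) - (n : ℝ) ^ p (n + 1)))) ∧
    (∑' n : ℕ, ENNReal.ofReal (x (n + 1) ^ p (n + 1) *
        (((n : ℝ) + 1) ^ p (n + 1) - (n : ℝ) ^ p (n + 1)))) ≤
      ∑' n : ℕ, ENNReal.ofReal (x (n + 1) ^ p (n + 1)) := by
  have hp_lower n : pl ≤ p (n + 1) := (hb (n + 1) (by omega)).1
  have hp_upper n : p (n + 1) ≤ 1 := (hb (n + 1) (by omega)).2.trans hpu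
  have hx' n : 0 ≤ x (n + 1) := hx (n + 1) (by omega)
  have hxp n : 0 ≤ x (n + 1) ^ p (n + 1) := Real.rpow_nonneg (hx' n) _
  have hq n : 0 ≤ p (n + 1) := hpl.le.trans (hp_lower n)
  constructor
  · refine ENNReal.tsum_ofReal_rpow_le_of_sum_range hpl (fun n ↦ Real.rpow_nonneg (hx' n) _)
      (fun n ↦ mul_nonneg (hxp n) (Real.natCast_add_one_rpow_sub_rpow_nonneg (hq n) n)) ?_
    exact Real.rpow_sum_range_rpow_div_le_sum_rpow_mul_sub hpl ((hp_lower 0).trans (hp_upper 0))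
      hx' hp_lower (antitone_nat_of_succ_le fun n ↦ hxm (n + 1) (by omega))
  · exact ENNReal.tsum_le_tsum fun n ↦ ENNReal.ofReal_le_ofReal <| mul_le_of_le_one_right (hxp n)
      (Real.natCast_add_one_rpow_sub_rpow_le_one (hq n) (hp_upper n) n)

/-- Sequence inequality (Lemma 5, inequality (4.1)): for a nonincreasing exponent
sequence `p_n` with `0 < p̲ ≤ p_n ≤ p̄ ≤ 1`, `p̲ = inf_n p_n`, and nonnegative
`x_n` with `x_n^{p_n}` nonincreasing,
`(∑ x_n^{p_n/p̲})^{p̲} ≤ ∑ x_n^{p_n} [n^{p_n} - (n-1)^{p_n}] ≤ ∑ x_n^{p_n}`,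
with sums taken in `[0,∞]`. -/
theorem sequence_inequality
    (p x : ℕ → ℝ) (pl pu : ℝ)
    (hpl : 0 < pl) (hpu : pu ≤ 1)
    (hb : ∀ n : ℕ, 1 ≤ n → pl ≤ p n ∧ p n ≤ pu)
    (hmono : ∀ n : ℕ, 1 ≤ n → p (n + 1) ≤ p n)
    (hinf : pl = ⨅ n : {k : ℕ // 1 ≤ k}, p (n : ℕ))
    (hx : ∀ n : ℕ, 1 ≤ n → 0 ≤ x n)
    (hxm : ∀ n : ℕ, 1 ≤ n → x (n + 1) ^ p (n + 1) ≤ x n ^ p n) :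
    (∑' n : ℕ, ENNReal.ofReal (x (n + 1) ^ (p (n + 1) / pl))) ^ pl ≤
      (∑' n : ℕ, ENNReal.ofReal (x (n + 1) ^ p (n + 1) *
        (((n : ℝ) + 1) ^ p (n + 1) - (n : ℝ) ^ p (n + 1)))) ∧
    (∑' n : ℕ, ENNReal.ofReal (x (n + 1) ^ p (n + 1) *
        (((n : ℝ) + 1) ^ p (n + 1) - (n : ℝ) ^ p (n + 1)))) ≤
      ∑' n : ℕ, ENNReal.ofReal (x (n + 1) ^ p (n + 1)) :=
  sequence_inequality_general p x pl pu hpl hpu hb hx hxm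
end

section
/- (Finite sequence inequality (4.2).) Let m ∈ ℕ, let p₁ ≥ p₂ ≥ … ≥ p_m with 0 < p_n ≤ 1 for all n, and let x₁, …, x_m be nonnegative reals such that x_n^{p_n} ≥ x_{n+1}^{p_{n+1}} for 1 ≤ n ≤ m − 1. Then (∑_{n=1}^m x_n^{p_n/p_m})^{p_m} ≤ ∑_{n=1}^m x_n^{p_n} [n^{p_n} − (n−1)^{p_n}]. -/
open Finset Real

/-!
Put `a n = x n ^ p n`, a nonincreasing sequence, and `P = p m ≤ p n`. Since
`t ↦ n ^ t - (n - 1) ^ t` is nondecreasing for `n ≥ 1`, it suffices to show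
`(∑ a n ^ P⁻¹) ^ P ≤ ∑ a n (n ^ P - (n - 1) ^ P)`, by induction on `m`. Appending
`c = a (m + 1) ^ P⁻¹` to `S = ∑_{n ≤ m} a n ^ P⁻¹ ≥ m c` raises `S ^ P` by at most
`(m c + c) ^ P - (m c) ^ P = a (m + 1) ((m + 1) ^ P - m ^ P)`, because the increments of the
concave function `t ↦ t ^ P` decrease.
-/

theorem antitoneOn_Icc_of_succ_le {α : Type*} [Preorder α] {f : ℕ → α} {a b : ℕ}
    (hf : ∀ n, a ≤ n → n < b → f (n + 1) ≤ f n) : AntitoneOn f (Set.Icc a b) :=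
  antitoneOn_of_add_one_le Set.ordConnected_Icc fun n _ hn hn1 => hf n hn.1 hn1.2

theorem ConcaveOn.add_sub_le_add_sub_s13 {𝕜 : Type*} [Field 𝕜] [LinearOrder 𝕜]
    [IsStrictOrderedRing 𝕜] {s : Set 𝕜} {f : 𝕜 → 𝕜} (hf : ConcaveOn 𝕜 s f) {x y c : 𝕜} (hx : x ∈ s)
    (hyc : y + c ∈ s) (hxy : x ≤ y) (hc : 0 ≤ c) :
    f (y + c) - f y ≤ f (x + c) - f x := by
  rcases hc.eq_or_lt with rfl | hc
  · simp
  have hg := hf.neg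
  have mem : ∀ z ∈ Set.Icc x (y + c), z ∈ s := fun z hz => hf.1.ordConnected.out hx hyc hz
  have hy : y ∈ s := mem y ⟨hxy, by linarith⟩
  have hxc : x + c ∈ s := mem (x + c) ⟨by linarith, by linarith⟩
  -- slope [y, y + c] ≤ slope [x, y + c] ≤ slope [x, x + c], as secant slopes of `f` decrease
  -- in either endpoint
  have h₁ := hg.secant_mono hyc hx hy (by linarith) (by linarith) hxy
  have h₂ := hg.secant_mono hx hxc hyc (by linarith) (by linarith) (by linarith)
  simp only [Pi.neg_apply] at h₁ h₂
  have hd : 0 < y + c - x := by linarith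
  rw [show x - (y + c) = -(y + c - x) by ring, show y - (y + c) = -c by ring,
    div_neg, div_neg, neg_le_neg_iff, div_le_div_iff₀ hc hd] at h₁
  rw [show x + c - x = c by ring, div_le_div_iff₀ hc hd] at h₂
  nlinarith

theorem rpow_add_sub_rpow_le {P x y c : ℝ} (hP : 0 ≤ P) (hP1 : P ≤ 1) (hx : 0 ≤ x) (hxy : x ≤ y)
    (hc : 0 ≤ c) : (y + c) ^ P - y ^ P ≤ (x + c) ^ P - x ^ P :=
  (Real.concaveOn_rpow hP hP1).add_sub_le_add_sub_s13 hx (Set.mem_Ici.2 (by linarith)) hxy hc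

theorem rpow_sub_rpow_le_rpow_sub_rpow {a b p q : ℝ} (ha : 0 ≤ a) (hab : a ≤ b) (hb : 1 ≤ b)
    (hp : 0 ≤ p) (hpq : p ≤ q) : b ^ p - a ^ p ≤ b ^ q - a ^ q := by
  have hb0 : 0 < b := one_pos.trans_le hb
  have hr0 : 0 ≤ a / b := div_nonneg ha hb0.le
  have hr1 : a / b ≤ 1 := (div_le_one hb0).2 hab
  have factor : ∀ r : ℝ, b ^ r - a ^ r = b ^ r * (1 - (a / b) ^ r) := fun r => by
    rw [div_rpow ha hb0.le, mul_sub, mul_div_cancel₀ _ (rpow_pos_of_pos hb0 r).ne', mul_one]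
  rw [factor, factor]
  exact mul_le_mul (rpow_le_rpow_of_exponent_le hb hpq)
    (sub_le_sub_left (rpow_le_rpow_of_exponent_ge' hr0 hr1 hp hpq) 1)
    (sub_nonneg.2 (rpow_le_one hr0 hr1 hp)) (rpow_nonneg hb0.le q)

theorem rpow_sum_rpow_inv_le_sum_mul_rpow_sub_rpow {P : ℝ} (hP : 0 < P) (hP1 : P ≤ 1) {a : ℕ → ℝ} :
    ∀ {m : ℕ}, (∀ n ∈ Set.Icc 1 m, 0 ≤ a n) → AntitoneOn a (Set.Icc 1 m) →
      (∑ n ∈ Icc 1 m, a n ^ P⁻¹) ^ P ≤ ∑ n ∈ Icc 1 m, a n * ((n : ℝ) ^ P - ((n : ℝ) - 1) ^ P)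
  | 0, _, _ => by simp [zero_rpow hP.ne']
  | m + 1, ha, hanti => by
    have ih := rpow_sum_rpow_inv_le_sum_mul_rpow_sub_rpow hP hP1 (m := m)
      (fun n hn => ha n ⟨hn.1, hn.2.trans m.le_succ⟩)
      (hanti.mono (Set.Icc_subset_Icc_right m.le_succ))
    rw [sum_Icc_succ_top (by omega), sum_Icc_succ_top (by omega)]
    set S := ∑ n ∈ Icc 1 m, a n ^ P⁻¹
    set c := a (m + 1) ^ P⁻¹
    have hlast : 0 ≤ a (m + 1) := ha (m + 1) ⟨by omega, le_rfl⟩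
    have hc : 0 ≤ c := rpow_nonneg hlast _
    have hmc : m * c ≤ S := by
      have := card_nsmul_le_sum (Icc 1 m) (fun n => a n ^ P⁻¹) c fun n hn => by
        rw [Finset.mem_Icc] at hn
        exact rpow_le_rpow hlast (hanti ⟨hn.1, by omega⟩ ⟨by omega, le_rfl⟩ (by omega))
          (inv_nonneg.2 hP.le)
      simpa using this
    have increment : (m * c + c) ^ P - (m * c) ^ P = a (m + 1) * ((m + 1) ^ P - m ^ P) := by
      rw [← add_one_mul, mul_rpow (by positivity) hc, mul_rpow (by positivity) hc,
        rpow_inv_rpow hlast hP.ne']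
      ring
    have step := rpow_add_sub_rpow_le hP.le hP1 (by positivity) hmc hc
    push_cast
    rw [add_sub_cancel_right]
    linarith

/-- Finite sequence inequality (4.2): for `p₁ ≥ … ≥ p_m` in `(0,1]` and
nonnegative `x_n` with `x_n^{p_n}` nonincreasing,
`(∑_{n=1}^m x_n^{p_n/p_m})^{p_m} ≤ ∑_{n=1}^m x_n^{p_n} [n^{p_n} - (n-1)^{p_n}]`. -/
theorem finite_sequence_inequality
    (m : ℕ) (hm : 1 ≤ m) (p x : ℕ → ℝ)
    (hp : ∀ n : ℕ, 1 ≤ n → n ≤ m → 0 < p n ∧ p n ≤ 1)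
    (hmono : ∀ n : ℕ, 1 ≤ n → n < m → p (n + 1) ≤ p n)
    (hx : ∀ n : ℕ, 1 ≤ n → n ≤ m → 0 ≤ x n)
    (hxm : ∀ n : ℕ, 1 ≤ n → n < m → x (n + 1) ^ p (n + 1) ≤ x n ^ p n) :
    (∑ n ∈ Finset.Icc 1 m, x n ^ (p n / p m)) ^ p m ≤
      ∑ n ∈ Finset.Icc 1 m, x n ^ p n * ((n : ℝ) ^ p n - ((n : ℝ) - 1) ^ p n) := by
  obtain ⟨hpm, hpm1⟩ := hp m hm le_rfl
  have hp_anti := antitoneOn_Icc_of_succ_le hmono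
  have lhs_eq : ∑ n ∈ Icc 1 m, x n ^ (p n / p m) = ∑ n ∈ Icc 1 m, (x n ^ p n) ^ (p m)⁻¹ :=
    sum_congr rfl fun n hn => by
      rw [Finset.mem_Icc] at hn
      rw [← rpow_mul (hx n hn.1 hn.2), div_eq_mul_inv]
  rw [lhs_eq]
  refine (rpow_sum_rpow_inv_le_sum_mul_rpow_sub_rpow hpm hpm1
    (fun n hn => rpow_nonneg (hx n hn.1 hn.2) _) (antitoneOn_Icc_of_succ_le hxm)).trans ?_
  refine sum_le_sum fun n hn => ?_
  rw [Finset.mem_Icc] at hn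
  have hn1 : (1 : ℝ) ≤ n := by exact_mod_cast hn.1
  exact mul_le_mul_of_nonneg_left
    (rpow_sub_rpow_le_rpow_sub_rpow (by linarith) (by linarith) hn1 hpm.le
      (hp_anti hn ⟨hm, le_rfl⟩ hn.2))
    (rpow_nonneg (hx n hn.1 hn.2) _)
end

section
/- (Inequality (4.3).) Let 0 < q < 1 and B > 0. Then for every t with 0 ≤ t ≤ B, (1 + t)^q ≤ 1 + t^q [(B⁻¹ + 1)^q − B^{−q}]. -/
/-!
For `t > 0` scaling by `t` gives `(1 + t)^q = 1 + t^q ((t⁻¹ + 1)^q - t⁻¹^q)`. Since `x ↦ x^q` is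
concave, its unit increments `(x + 1)^q - x^q` decrease in `x`, and `t⁻¹ ≥ B⁻¹`.
-/

open Real Set

theorem ConcaveOn.map_add_sub_map_le {s : Set ℝ} {f : ℝ → ℝ} (hf : ConcaveOn ℝ s f)
    {x y h : ℝ} (hx : x ∈ s) (hyh : y + h ∈ s) (hxy : x ≤ y) (hh : 0 ≤ h) :
    f (y + h) - f y ≤ f (x + h) - f x := by
  rcases (add_nonneg (sub_nonneg.2 hxy) hh).eq_or_lt with hd | hd
  · obtain rfl : y = x := by linarith
    obtain rfl : h = 0 := by linarith
    simp
  -- `y` and `x + h` are the convex combinations of `x` and `y + h` with swapped weights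
  have hw : h / (y - x + h) + (y - x) / (y - x + h) = 1 := by field_simp; ring
  have hy := hf.2 hx hyh (div_nonneg hh hd.le) (div_nonneg (sub_nonneg.2 hxy) hd.le) hw
  have hxh := hf.2 hx hyh (div_nonneg (sub_nonneg.2 hxy) hd.le) (div_nonneg hh hd.le)
    (by rw [add_comm, hw])
  have ey : h / (y - x + h) * x + (y - x) / (y - x + h) * (y + h) = y := by field_simp; ring
  have exh : (y - x) / (y - x + h) * x + h / (y - x + h) * (y + h) = x + h := by
    field_simp; ring
  simp only [smul_eq_mul, ey, exh] at hy hxh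
  linear_combination hy + hxh - (f x + f (y + h)) * hw

/-- Inequality (4.3): for `0 < q < 1`, `B > 0` and `0 ≤ t ≤ B`,
`(1 + t)^q ≤ 1 + t^q [(B⁻¹ + 1)^q - B^{-q}]`. -/
theorem pow_one_add_le
    (q B t : ℝ) (hq0 : 0 < q) (hq1 : q < 1) (hB : 0 < B)
    (ht0 : 0 ≤ t) (htB : t ≤ B) :
    (1 + t) ^ q ≤ 1 + t ^ q * ((B⁻¹ + 1) ^ q - B ^ (-q)) := by
  rcases ht0.eq_or_lt with rfl | ht
  · simp [zero_rpow hq0.ne']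
  have hdiff : (t⁻¹ + 1) ^ q - t⁻¹ ^ q ≤ (B⁻¹ + 1) ^ q - B⁻¹ ^ q :=
    (concaveOn_rpow hq0.le hq1.le).map_add_sub_map_le (f := fun x ↦ x ^ q)
      (inv_nonneg.2 hB.le) (by simp only [mem_Ici]; positivity) (inv_anti₀ ht htB) zero_le_one
  have hscale : (1 + t) ^ q = 1 + t ^ q * ((t⁻¹ + 1) ^ q - t⁻¹ ^ q) := by
    rw [mul_sub, ← mul_rpow ht.le (by positivity), ← mul_rpow ht.le (by positivity),
      mul_inv_cancel₀ ht.ne', mul_add, mul_inv_cancel₀ ht.ne', one_rpow, mul_one]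
    ring
  rw [hscale, rpow_neg hB.le, ← inv_rpow hB.le]
  gcongr
end

section
/- (Lemma 2.) Let 0 < s < 1, let −∞ < a < b ≤ ∞, and let f be a nonnegative, decreasing (nonincreasing) function on (a, b). Then (∫_a^b f(x) dx)^s ≤ s ∫_a^b f(x)^s (x − a)^{s−1} dx. -/
/-!
With `F x = ∫_a^x f`, monotonicity gives `F x ≥ (x - a) f x`, so, as `s - 1 ≤ 0`, the derivative
`s F^(s-1) f` of `F^s` is at most `s f^s (x - a)^(s-1)`; integrating gives the inequality on a
bounded interval on which `f` is bounded. Since `f` need not be continuous, `F` is differentiated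
from the right, where its derivative is `f (x+) ≤ f x`, and `F` is replaced by `ε + F` so that
`(ε + F)^s` is differentiable even where `F` vanishes.

Near `a` the function `f` may blow up, so the general case is reached through windows `(a', c)`
with `a < a' < c < b`: the translate `f (· + (a' - a))` is bounded on `[a, c - (a' - a)]` and lies
below `f`, and these windows exhaust `(a, b)`.
-/

open MeasureTheory Set Function
open scoped ENNReal

theorem Antitone.hasDerivWithinAt_integral_Ici {g : ℝ → ℝ} (hg : Antitone g) (a x : ℝ) :
    HasDerivWithinAt (fun u => ∫ t in a..u, g t) (rightLim g x) (Ici x) x :=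
  intervalIntegral.integral_hasDerivWithinAt_of_tendsto_ae_right hg.intervalIntegrable
    hg.measurable.stronglyMeasurable.stronglyMeasurableAtFilter
    ((hg.tendsto_rightLim x).mono_left inf_le_left)

theorem mul_rpow_sub_one_le {s r v t F : ℝ} (hs0 : 0 ≤ s) (hs1 : s ≤ 1) (hr : 0 ≤ r)
    (hrv : r ≤ v) (ht : 0 < t) (hF : t * r ≤ F) : r * F ^ (s - 1) ≤ v ^ s * t ^ (s - 1) := by
  rcases hr.eq_or_lt with rfl | hr
  · rw [zero_mul]; positivity
  calc r * F ^ (s - 1) ≤ r * (t * r) ^ (s - 1) :=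
        mul_le_mul_of_nonneg_left
          (Real.rpow_le_rpow_of_nonpos (by positivity) hF (by linarith)) hr.le
    _ = r ^ s * t ^ (s - 1) := by
        rw [Real.mul_rpow ht.le hr.le, Real.rpow_sub_one hr.ne']
        field_simp
    _ ≤ v ^ s * t ^ (s - 1) := by gcongr

theorem intervalIntegrable_rpow_mul_sub_rpow_of_antitoneOn {s : ℝ} (hs0 : 0 < s) {g : ℝ → ℝ}
    {a c : ℝ} (hac : a ≤ c) (hg : AntitoneOn g (Icc a c)) (hgc : 0 ≤ g c) :
    IntervalIntegrable (fun x => g x ^ s * (x - a) ^ (s - 1)) volume a c := by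
  have hw : IntervalIntegrable (fun x => (x - a) ^ (s - 1)) volume a c := by
    simpa using (intervalIntegral.intervalIntegrable_rpow' (a := 0) (b := c - a)
      (r := s - 1) (by linarith)).comp_sub_right a
  rw [intervalIntegrable_iff_integrableOn_Icc_of_le hac] at hw ⊢
  refine (hw.const_mul (g a ^ s)).mono' ?_ ?_
  · exact (((aemeasurable_restrict_of_antitoneOn measurableSet_Icc hg).pow_const s).mul
      (by fun_prop)).aestronglyMeasurable
  · refine (ae_restrict_iff' measurableSet_Icc).2 (ae_of_all _ fun x hx => ?_)
    have hgx : 0 ≤ g x := hgc.trans (hg hx ⟨hac, le_rfl⟩ hx.2)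
    have hw : 0 ≤ (x - a) ^ (s - 1) := Real.rpow_nonneg (by linarith [hx.1]) _
    rw [Real.norm_of_nonneg (by positivity)]
    exact mul_le_mul_of_nonneg_right
      (Real.rpow_le_rpow hgx (hg ⟨le_rfl, hac⟩ hx hx.1) hs0.le) hw

theorem rpow_add_integral_sub_rpow_le {s : ℝ} (hs0 : 0 < s) (hs1 : s ≤ 1) {g : ℝ → ℝ}
    (hg : Antitone g) {a c : ℝ} (hac : a ≤ c) (hgc : 0 ≤ g c) {ε : ℝ} (hε : 0 < ε) :
    (ε + ∫ x in a..c, g x) ^ s - ε ^ s ≤ s * ∫ x in a..c, g x ^ s * (x - a) ^ (s - 1) := by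
  set F : ℝ → ℝ := fun u => ∫ t in a..u, g t
  have hF_ge : ∀ x, a ≤ x → (x - a) * g x ≤ F x := fun x hx => by
    simpa using intervalIntegral.integral_mono_on (f := fun _ => g x) (μ := volume) hx
      intervalIntegrable_const hg.intervalIntegrable fun t ht => hg ht.2
  have hF_pos : ∀ x ∈ Icc a c, 0 < ε + F x := fun x hx =>
    add_pos_of_pos_of_nonneg hε <|
      (mul_nonneg (by linarith [hx.1]) (hgc.trans (hg hx.2))).trans (hF_ge x hx.1)
  have hcont : ContinuousOn (fun u => (ε + F u) ^ s) (Icc a c) :=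
    (continuousOn_const.add (intervalIntegral.continuous_primitive
      (fun _ _ => hg.intervalIntegrable) a).continuousOn).rpow_const fun _ _ => Or.inr hs0.le
  have hderiv : ∀ x ∈ Ioo a c, HasDerivWithinAt (fun u => (ε + F u) ^ s)
      (rightLim g x * s * (ε + F x) ^ (s - 1)) (Ioi x) x := fun x hx =>
    (((hg.hasDerivWithinAt_integral_Ici a x).const_add ε).rpow_const
      (Or.inl (hF_pos x (Ioo_subset_Icc_self hx)).ne')).mono Ioi_subset_Ici_self
  have hint : IntegrableOn (fun x => s * (g x ^ s * (x - a) ^ (s - 1))) (Icc a c) :=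
    (intervalIntegrable_iff_integrableOn_Icc_of_le hac).1
      ((intervalIntegrable_rpow_mul_sub_rpow_of_antitoneOn hs0 hac (hg.antitoneOn _)
        hgc).const_mul s)
  have hle : ∀ x ∈ Ioo a c,
      rightLim g x * s * (ε + F x) ^ (s - 1) ≤ s * (g x ^ s * (x - a) ^ (s - 1)) := by
    intro x hx
    have hxa : 0 < x - a := by linarith [hx.1]
    have hF : (x - a) * rightLim g x ≤ ε + F x :=
      (mul_le_mul_of_nonneg_left (hg.rightLim_le le_rfl) hxa.le).trans
        ((hF_ge x hx.1.le).trans (le_add_of_nonneg_left hε.le))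
    rw [mul_right_comm, mul_comm _ s]
    exact mul_le_mul_of_nonneg_left (mul_rpow_sub_one_le hs0.le hs1
      (hgc.trans (hg.le_rightLim hx.2)) (hg.rightLim_le le_rfl) hxa hF) hs0.le
  rw [← intervalIntegral.integral_const_mul]
  simpa [F] using intervalIntegral.sub_le_integral_of_hasDeriv_right_of_le hac hcont hderiv
    hint hle

theorem integral_rpow_le_of_antitone {s : ℝ} (hs0 : 0 < s) (hs1 : s ≤ 1) {g : ℝ → ℝ}
    (hg : Antitone g) {a c : ℝ} (hac : a ≤ c) (hgc : 0 ≤ g c) :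
    (∫ x in a..c, g x) ^ s ≤ s * ∫ x in a..c, g x ^ s * (x - a) ^ (s - 1) := by
  have hI : 0 ≤ ∫ x in a..c, g x :=
    intervalIntegral.integral_nonneg hac fun x hx => hgc.trans (hg hx.2)
  refine le_of_forall_pos_le_add fun δ hδ => ?_
  have hε := rpow_add_integral_sub_rpow_le hs0 hs1 hg hac hgc (ε := δ ^ s⁻¹) (by positivity)
  rw [Real.rpow_inv_rpow hδ.le hs0.ne'] at hε
  calc (∫ x in a..c, g x) ^ s ≤ (δ ^ s⁻¹ + ∫ x in a..c, g x) ^ s :=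
        Real.rpow_le_rpow hI (le_add_of_nonneg_left (by positivity)) hs0.le
    _ ≤ _ := by linarith

theorem integral_rpow_le_of_antitoneOn {s : ℝ} (hs0 : 0 < s) (hs1 : s ≤ 1) {g : ℝ → ℝ}
    {a c : ℝ} (hac : a ≤ c) (hg : AntitoneOn g (Icc a c)) (hgc : 0 ≤ g c) :
    (∫ x in a..c, g x) ^ s ≤ s * ∫ x in a..c, g x ^ s * (x - a) ^ (s - 1) := by
  set G : ℝ → ℝ := fun x => g (projIcc a c hac x)
  have hG : Antitone G := fun x y hxy =>
    hg (projIcc a c hac x).2 (projIcc a c hac y).2 (monotone_projIcc hac hxy)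
  have hGg : EqOn G g (uIcc a c) := fun x hx => by
    rw [uIcc_of_le hac] at hx
    simp [G, projIcc_of_mem hac hx]
  have hGg' : EqOn (fun x => G x ^ s * (x - a) ^ (s - 1))
      (fun x => g x ^ s * (x - a) ^ (s - 1)) (uIcc a c) := fun x hx => by simp only [hGg hx]
  have h := integral_rpow_le_of_antitone hs0 hs1 hG hac (by simpa [G] using hgc)
  rwa [intervalIntegral.integral_congr hGg, intervalIntegral.integral_congr hGg'] at h

theorem ofReal_intervalIntegral_eq_setLIntegral_Ioo {f : ℝ → ℝ} {a b : ℝ} (hab : a ≤ b)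
    (hf : IntervalIntegrable f volume a b) (hf0 : ∀ x ∈ Ioo a b, 0 ≤ f x) :
    ENNReal.ofReal (∫ x in a..b, f x) = ∫⁻ x in Ioo a b, ENNReal.ofReal (f x) := by
  rw [intervalIntegral.integral_of_le hab, integral_Ioc_eq_integral_Ioo]
  exact ofReal_integral_eq_lintegral_ofReal
    ((intervalIntegrable_iff_integrableOn_Ioo_of_le hab).1 hf)
    ((ae_restrict_iff' measurableSet_Ioo).2 (ae_of_all _ hf0))

theorem setLIntegral_rpow_comp_add_le {s : ℝ} (hs0 : 0 ≤ s) {f : ℝ → ℝ} {a c δ : ℝ}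
    (hδ : 0 ≤ δ) (hf : AntitoneOn f (Ioc a c)) (hfc : 0 ≤ f c) :
    ∫⁻ y in Ioo a (c - δ), ENNReal.ofReal (f (y + δ) ^ s * (y - a) ^ (s - 1)) ≤
      ∫⁻ x in Ioo a c, ENNReal.ofReal (f x ^ s * (x - a) ^ (s - 1)) := by
  calc ∫⁻ y in Ioo a (c - δ), ENNReal.ofReal (f (y + δ) ^ s * (y - a) ^ (s - 1))
      ≤ ∫⁻ y in Ioo a (c - δ), ENNReal.ofReal (f y ^ s * (y - a) ^ (s - 1)) := by
        refine setLIntegral_mono' measurableSet_Ioo fun y hy => ENNReal.ofReal_le_ofReal ?_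
        have hy' : y + δ ∈ Ioc a c := ⟨by linarith [hy.1], by linarith [hy.2]⟩
        refine mul_le_mul_of_nonneg_right (Real.rpow_le_rpow
          (hfc.trans (hf hy' ⟨hy'.1.trans_le hy'.2, le_rfl⟩ hy'.2))
          (hf ⟨hy.1, by linarith [hy.2]⟩ hy' (by linarith)) hs0)
          (Real.rpow_nonneg (by linarith [hy.1]) _)
    _ ≤ _ := lintegral_mono_set (Ioo_subset_Ioo_right (by linarith))

theorem rpow_setLIntegral_Ioo_le {s : ℝ} (hs0 : 0 < s) (hs1 : s ≤ 1) {f : ℝ → ℝ}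
    {a a' c : ℝ} (haa' : a < a') (hf : AntitoneOn f (Ioc a c)) (hfc : 0 ≤ f c) :
    (∫⁻ x in Ioo a' c, ENNReal.ofReal (f x)) ^ s ≤
      ENNReal.ofReal s * ∫⁻ x in Ioo a c, ENNReal.ofReal (f x ^ s * (x - a) ^ (s - 1)) := by
  rcases le_or_gt c a' with hca' | ha'c
  · simp [Ioo_eq_empty (not_lt.2 hca'), ENNReal.zero_rpow_of_pos hs0]
  set δ := a' - a
  have hac : a ≤ c - δ := by linarith
  set h : ℝ → ℝ := fun y => f (y + δ)
  have hh : AntitoneOn h (Icc a (c - δ)) := fun x hx y hy hxy =>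
    hf ⟨by linarith [hx.1], by linarith [hx.2]⟩ ⟨by linarith [hy.1], by linarith [hy.2]⟩
      (by linarith)
  have hhc : 0 ≤ h (c - δ) := by simpa [h] using hfc
  have hh0 : ∀ y ∈ Icc a (c - δ), 0 ≤ h y := fun y hy => hhc.trans (hh hy ⟨hac, le_rfl⟩ hy.2)
  have hlhs : ENNReal.ofReal (∫ y in a..c - δ, h y) = ∫⁻ x in Ioo a' c, ENNReal.ofReal (f x) := by
    have hf' : AntitoneOn f (uIcc a' c) := hf.mono fun x hx => by
      rw [uIcc_of_le ha'c.le] at hx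
      exact ⟨haa'.trans_le hx.1, hx.2⟩
    rw [intervalIntegral.integral_comp_add_right, show a + δ = a' by ring,
      show c - δ + δ = c by ring]
    exact ofReal_intervalIntegral_eq_setLIntegral_Ioo ha'c.le hf'.intervalIntegrable
      fun x hx => hfc.trans (hf ⟨haa'.trans hx.1, hx.2.le⟩ ⟨haa'.trans ha'c, le_rfl⟩ hx.2.le)
  have hrhs : ENNReal.ofReal (∫ y in a..c - δ, h y ^ s * (y - a) ^ (s - 1)) =
      ∫⁻ y in Ioo a (c - δ), ENNReal.ofReal (h y ^ s * (y - a) ^ (s - 1)) :=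
    ofReal_intervalIntegral_eq_setLIntegral_Ioo hac
      (intervalIntegrable_rpow_mul_sub_rpow_of_antitoneOn hs0 hac hh hhc)
      fun y hy => mul_nonneg (Real.rpow_nonneg (hh0 y (Ioo_subset_Icc_self hy)) _)
        (Real.rpow_nonneg (by linarith [hy.1]) _)
  calc (∫⁻ x in Ioo a' c, ENNReal.ofReal (f x)) ^ s
      = ENNReal.ofReal ((∫ y in a..c - δ, h y) ^ s) := by
        rw [← hlhs, ENNReal.ofReal_rpow_of_nonneg
          (intervalIntegral.integral_nonneg hac hh0) hs0.le]
    _ ≤ ENNReal.ofReal (s * ∫ y in a..c - δ, h y ^ s * (y - a) ^ (s - 1)) :=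
        ENNReal.ofReal_le_ofReal (integral_rpow_le_of_antitoneOn hs0 hs1 hac hh hhc)
    _ ≤ _ := by
        rw [ENNReal.ofReal_mul hs0.le, hrhs]
        exact mul_le_mul_right
          (setLIntegral_rpow_comp_add_le hs0.le (sub_nonneg.2 haa'.le) hf hfc) _

theorem setLIntegral_le_of_forall_Ioo_le {a : ℝ} {b : EReal} {g : ℝ → ℝ≥0∞} {R : ℝ≥0∞}
    (h : ∀ p q : ℝ, a < p → p < q → (q : EReal) < b → ∫⁻ x in Ioo p q, g x ≤ R) :
    ∫⁻ x in {x : ℝ | a < x ∧ (x : EReal) < b}, g x ≤ R := by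
  let T := {pq : ℚ × ℚ // a < pq.1 ∧ ((pq.2 : ℝ) : EReal) < b}
  have hS : {x : ℝ | a < x ∧ (x : EReal) < b} = ⋃ t : T, Ioo (t.1.1 : ℝ) t.1.2 := by
    ext x
    simp only [mem_ofPred_eq, mem_iUnion]
    constructor
    · rintro ⟨hax, hxb⟩
      obtain ⟨p, hap, hpx⟩ := exists_rat_btwn hax
      obtain ⟨q, hxq, hqb⟩ := EReal.lt_iff_exists_rat_btwn.1 hxb
      exact ⟨⟨(p, q), hap, hqb⟩, hpx, EReal.coe_lt_coe_iff.1 hxq⟩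
    · rintro ⟨⟨⟨p, q⟩, hap, hqb⟩, hpx, hxq⟩
      exact ⟨hap.trans hpx, (EReal.coe_lt_coe_iff.2 hxq).trans hqb⟩
  have hdir : Directed (· ⊆ ·) fun t : T => Ioo (t.1.1 : ℝ) t.1.2 := by
    rintro ⟨⟨p, q⟩, hap, hqb⟩ ⟨⟨p', q'⟩, hap', hqb'⟩
    refine ⟨⟨(min p p', max q q'), by simpa using lt_min hap hap', ?_⟩,
      Ioo_subset_Ioo (by simp) (by simp), Ioo_subset_Ioo (by simp) (by simp)⟩
    rcases le_total q q' with hqq | hqq <;> simpa [hqq]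
  rw [hS, setLIntegral_iUnion_of_directed _ hdir]
  refine iSup_le fun ⟨⟨p, q⟩, hap, hqb⟩ => ?_
  rcases le_or_gt (q : ℝ) p with hqp | hpq
  · simp [Ioo_eq_empty (not_lt.2 hqp)]
  · exact h p q hap hpq hqb

theorem integral_pow_le_decreasing_general
    (s : ℝ) (hs0 : 0 < s) (hs1 : s < 1) (a : ℝ) (b : EReal)
    (f : ℝ → ℝ)
    (hpos : ∀ x : ℝ, a < x → (x : EReal) < b → 0 ≤ f x)
    (hdec : ∀ x y : ℝ, a < x → x ≤ y → (y : EReal) < b → f y ≤ f x) :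
    (∫⁻ x in {x : ℝ | a < x ∧ (x : EReal) < b}, ENNReal.ofReal (f x)) ^ s ≤
      ENNReal.ofReal s *
        ∫⁻ x in {x : ℝ | a < x ∧ (x : EReal) < b},
          ENNReal.ofReal (f x ^ s * (x - a) ^ (s - 1)) := by
  rw [← ENNReal.le_rpow_inv_iff hs0]
  refine setLIntegral_le_of_forall_Ioo_le fun p q hap hpq hqb => ?_
  have hf : AntitoneOn f (Ioc a q) := fun x hx y hy hxy =>
    hdec x y hx.1 hxy ((EReal.coe_le_coe_iff.2 hy.2).trans_lt hqb)
  rw [ENNReal.le_rpow_inv_iff hs0]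
  calc _ ≤ ENNReal.ofReal s * ∫⁻ x in Ioo a q, ENNReal.ofReal (f x ^ s * (x - a) ^ (s - 1)) :=
        rpow_setLIntegral_Ioo_le hs0 hs1.le hap hf (hpos q (hap.trans hpq) hqb)
    _ ≤ _ := by
        gcongr
        exact fun x hx => ⟨hx.1, (EReal.coe_lt_coe_iff.2 hx.2).trans hqb⟩

/-- Lemma 2: for `0 < s < 1`, `-∞ < a < b ≤ ∞` and `f` nonnegative and
nonincreasing on `(a,b)`, `(∫_a^b f)^s ≤ s ∫_a^b f(x)^s (x-a)^{s-1} dx`,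
both sides interpreted in `[0,∞]`. -/
theorem integral_pow_le_decreasing
    (s : ℝ) (hs0 : 0 < s) (hs1 : s < 1) (a : ℝ) (b : EReal) (hab : (a : EReal) < b)
    (f : ℝ → ℝ) (hf : Measurable f)
    (hpos : ∀ x : ℝ, a < x → (x : EReal) < b → 0 ≤ f x)
    (hdec : ∀ x y : ℝ, a < x → x ≤ y → (y : EReal) < b → f y ≤ f x) :
    (∫⁻ x in {x : ℝ | a < x ∧ (x : EReal) < b}, ENNReal.ofReal (f x)) ^ s ≤
      ENNReal.ofReal s *
        ∫⁻ x in {x : ℝ | a < x ∧ (x : EReal) < b},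
          ENNReal.ofReal (f x ^ s * (x - a) ^ (s - 1)) :=
  integral_pow_le_decreasing_general s hs0 hs1 a b f hpos hdec
end

section
/- (Lemma 3.) Let 0 < s < 1, let −∞ ≤ a < b < ∞, and let f be a nonnegative, increasing (nondecreasing) function on (a, b). Then (∫_a^b f(x) dx)^s ≤ s ∫_a^b f(x)^s (b − x)^{s−1} dx. -/
/-!
Write `F x = ∫_x^b g` for the tail integral of `g ≥ 0`. Formally `d(F^s) = s F^(s-1) dF`, so
`(∫ g)^s ≤ s ∫ g F^(s-1)`; for nondecreasing `g` we have `F x ≥ g x (b - x)`, and since `s - 1 < 0`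
this gives `g F^(s-1) ≤ g^s (b - x)^(s-1)`.

The chain-rule inequality is proved without differentiating `F`: writing
`c^(s-1) = ∫_c^∞ (1 - s) u^(s-2) du`, Tonelli turns `∫ g F^(s-1)` into
`∫_0^∞ (1 - s) u^(s-2) (∫_{F ≤ u} g) du`. For bounded `g` the tail `F` is continuous, so the inner
integral is at least `min(u, ∫ g)` by the intermediate value theorem, and the resulting
one-variable integral equals `(∫ g)^s / s`. Unbounded `g` is truncated at `n`.
-/

open MeasureTheory Set
open scoped ENNReal

lemma ENNReal.rpow_le_rpow_of_nonpos {x y : ℝ≥0∞} {z : ℝ} (hxy : x ≤ y) (hz : z ≤ 0) :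
    y ^ z ≤ x ^ z := by
  rw [← neg_neg z, ENNReal.rpow_neg y, ENNReal.rpow_neg x]
  exact ENNReal.inv_le_inv.2 (ENNReal.rpow_le_rpow hxy (neg_nonneg.2 hz))

lemma ENNReal.iSup_rpow {ι : Sort*} {s : ℝ} (hs : 0 < s) (f : ι → ℝ≥0∞) :
    (⨆ i, f i) ^ s = ⨆ i, f i ^ s :=
  (ENNReal.orderIsoRpow s hs).map_iSup f

noncomputable def rpowTailDensity (s u : ℝ) : ℝ≥0∞ := ENNReal.ofReal ((1 - s) * u ^ (s - 2))

section RpowTailDensity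

variable {s : ℝ}

lemma measurable_rpowTailDensity : Measurable (rpowTailDensity s) := by
  unfold rpowTailDensity; fun_prop

lemma lintegral_Ioi_rpowTailDensity (hs : s < 1) {t : ℝ} (ht : 0 < t) :
    ∫⁻ u in Ioi t, rpowTailDensity s u = ENNReal.ofReal t ^ (s - 1) := by
  have hint : IntegrableOn (fun u : ℝ => (1 - s) * u ^ (s - 2)) (Ioi t) :=
    (integrableOn_Ioi_rpow_of_lt (by linarith) ht).const_mul _
  have hnonneg : 0 ≤ᵐ[volume.restrict (Ioi t)] fun u => (1 - s) * u ^ (s - 2) := by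
    filter_upwards [ae_restrict_mem measurableSet_Ioi] with u hu
    exact mul_nonneg (by linarith) (Real.rpow_nonneg (ht.trans hu).le _)
  unfold rpowTailDensity
  rw [← ofReal_integral_eq_lintegral_ofReal hint hnonneg, integral_const_mul,
    integral_Ioi_rpow_of_lt (by linarith) ht, ENNReal.ofReal_rpow_of_pos ht,
    show s - 2 + 1 = s - 1 by ring]
  congr 1
  field_simp [show s - 1 ≠ 0 by linarith]
  ring

lemma lintegral_Ioc_rpow_sub_one (hs : 0 < s) {t : ℝ} (ht : 0 ≤ t) :
    ∫⁻ u in Ioc 0 t, ENNReal.ofReal (u ^ (s - 1)) = ENNReal.ofReal (t ^ s / s) := by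
  have hint : IntegrableOn (fun u : ℝ => u ^ (s - 1)) (Ioc 0 t) :=
    (intervalIntegrable_iff_integrableOn_Ioc_of_le ht).1
      (intervalIntegral.intervalIntegrable_rpow' (by linarith))
  have hnonneg : 0 ≤ᵐ[volume.restrict (Ioc 0 t)] fun u => u ^ (s - 1) := by
    filter_upwards [ae_restrict_mem measurableSet_Ioc] with u hu
    exact Real.rpow_nonneg hu.1.le _
  rw [← ofReal_integral_eq_lintegral_ofReal hint hnonneg, ← intervalIntegral.integral_of_le ht,
    integral_rpow (Or.inl (by linarith)), sub_add_cancel, Real.zero_rpow hs.ne', sub_zero]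

lemma ofReal_mul_lintegral_min_mul_rpowTailDensity (hs0 : 0 < s) (hs1 : s < 1) {t : ℝ}
    (ht : 0 < t) :
    ENNReal.ofReal s *
        ∫⁻ u in Ioi 0, min (ENNReal.ofReal u) (ENNReal.ofReal t) * rpowTailDensity s u =
      ENNReal.ofReal t ^ s := by
  have hlow : ∫⁻ u in Ioc 0 t, min (ENNReal.ofReal u) (ENNReal.ofReal t) * rpowTailDensity s u =
      ENNReal.ofReal (1 - s) * ENNReal.ofReal (t ^ s / s) := by
    rw [← lintegral_Ioc_rpow_sub_one hs0 ht.le, ← lintegral_const_mul' _ _ ENNReal.ofReal_ne_top]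
    refine setLIntegral_congr_fun measurableSet_Ioc fun u hu => ?_
    rw [min_eq_left (ENNReal.ofReal_le_ofReal hu.2), rpowTailDensity,
      ← ENNReal.ofReal_mul hu.1.le, ← ENNReal.ofReal_mul (by linarith)]
    congr 1
    have hu0 : u ≠ 0 := hu.1.ne'
    rw [show s - 2 = s - 1 - 1 by ring, Real.rpow_sub_one hu0]
    field_simp
  have hhigh : ∫⁻ u in Ioi t, min (ENNReal.ofReal u) (ENNReal.ofReal t) * rpowTailDensity s u =
      ENNReal.ofReal t * ENNReal.ofReal t ^ (s - 1) := by
    rw [← lintegral_Ioi_rpowTailDensity hs1 ht, ← lintegral_const_mul _ measurable_rpowTailDensity]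
    refine setLIntegral_congr_fun measurableSet_Ioi fun u hu => ?_
    rw [min_eq_right (ENNReal.ofReal_le_ofReal (le_of_lt hu))]
  rw [← Ioc_union_Ioi_eq_Ioi ht.le, lintegral_union measurableSet_Ioi (Ioc_disjoint_Ioi le_rfl),
    hlow, hhigh, ENNReal.ofReal_rpow_of_pos ht, ENNReal.ofReal_rpow_of_pos ht,
    ← ENNReal.ofReal_mul (by linarith), ← ENNReal.ofReal_mul ht.le,
    ← ENNReal.ofReal_add (by positivity) (by positivity), ← ENNReal.ofReal_mul hs0.le]
  congr 1
  rw [Real.rpow_sub_one ht.ne']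
  field_simp
  ring

lemma rpow_le_ofReal_mul_lintegral_min_mul_rpowTailDensity (hs0 : 0 < s) (hs1 : s < 1)
    (I : ℝ≥0∞) :
    I ^ s ≤ ENNReal.ofReal s * ∫⁻ u in Ioi 0, min (ENNReal.ofReal u) I * rpowTailDensity s u := by
  have hfinite : ∀ t : ℝ, 0 ≤ t → ENNReal.ofReal t ^ s ≤
      ENNReal.ofReal s * ∫⁻ u in Ioi 0, min (ENNReal.ofReal u) (ENNReal.ofReal t) *
        rpowTailDensity s u := by
    intro t ht
    rcases ht.eq_or_lt with rfl | ht
    · simp [ENNReal.zero_rpow_of_pos hs0]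
    · exact (ofReal_mul_lintegral_min_mul_rpowTailDensity hs0 hs1 ht).ge
  rcases eq_or_ne I ⊤ with rfl | hI
  · rw [← ENNReal.iSup_natCast, ENNReal.iSup_rpow hs0]
    refine iSup_le fun n => ?_
    rw [← ENNReal.ofReal_natCast]
    refine (hfinite n n.cast_nonneg).trans ?_
    gcongr
    exact le_iSup_of_le n (ENNReal.ofReal_natCast n).le
  · simpa [ENNReal.ofReal_toReal hI] using hfinite I.toReal ENNReal.toReal_nonneg

lemma lintegral_indicator_rpowTailDensity_le (hs : s < 1) (c : ℝ≥0∞) :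
    ∫⁻ u in Ioi 0, {u | c ≤ ENNReal.ofReal u}.indicator (rpowTailDensity s) u ≤ c ^ (s - 1) := by
  rcases eq_or_ne c 0 with rfl | hc0
  · simp [ENNReal.zero_rpow_of_neg (show s - 1 < 0 by linarith)]
  rcases eq_or_ne c ⊤ with rfl | hctop
  · simp
  have ht : 0 < c.toReal := ENNReal.toReal_pos hc0 hctop
  have hset : {u | c ≤ ENNReal.ofReal u} ∩ Ioi 0 = Ici c.toReal := by
    ext u
    simp only [mem_inter_iff, mem_ofPred_eq, mem_Ioi, mem_Ici]
    constructor
    · rintro ⟨hcu, hu⟩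
      exact (ENNReal.le_ofReal_iff_toReal_le hctop hu.le).1 hcu
    · intro hu
      exact ⟨(ENNReal.le_ofReal_iff_toReal_le hctop (ht.trans_le hu).le).2 hu, ht.trans_le hu⟩
  have hmeas : MeasurableSet {u : ℝ | c ≤ ENNReal.ofReal u} :=
    measurableSet_le measurable_const ENNReal.measurable_ofReal
  rw [lintegral_indicator hmeas, Measure.restrict_restrict hmeas, hset,
    setLIntegral_congr Ioi_ae_eq_Ici.symm, lintegral_Ioi_rpowTailDensity hs ht,
    ENNReal.ofReal_toReal hctop]

lemma lintegral_meas_le_mul_rpowTailDensity_le {α : Type*} [MeasurableSpace α] (ν : Measure α)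
    [SFinite ν] (hs : s < 1) {F : α → ℝ≥0∞} (hF : Measurable F) :
    ∫⁻ u in Ioi 0, ν {x | F x ≤ ENNReal.ofReal u} * rpowTailDensity s u ≤
      ∫⁻ x, F x ^ (s - 1) ∂ν := by
  set G : α → ℝ → ℝ≥0∞ := fun x u => {u | F x ≤ ENNReal.ofReal u}.indicator (rpowTailDensity s) u
  have hG : Measurable (Function.uncurry G) := by
    have hE : MeasurableSet {p : α × ℝ | F p.1 ≤ ENNReal.ofReal p.2} :=
      measurableSet_le (hF.comp measurable_fst) (ENNReal.measurable_ofReal.comp measurable_snd)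
    exact ((measurable_rpowTailDensity (s := s)).comp measurable_snd).indicator hE
  have hslice : ∀ u, ∫⁻ x, G x u ∂ν = ν {x | F x ≤ ENNReal.ofReal u} * rpowTailDensity s u := by
    intro u
    rw [mul_comm, ← lintegral_indicator_const (measurableSet_le hF measurable_const)]
    rfl
  calc ∫⁻ u in Ioi 0, ν {x | F x ≤ ENNReal.ofReal u} * rpowTailDensity s u
      = ∫⁻ x, (∫⁻ u in Ioi 0, G x u) ∂ν := by
        simp_rw [← hslice]
        exact (lintegral_lintegral_swap hG.aemeasurable).symm
    _ ≤ ∫⁻ x, F x ^ (s - 1) ∂ν :=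
        lintegral_mono fun x => lintegral_indicator_rpowTailDensity_le hs (F x)

end RpowTailDensity

section TailIntegral

variable {b : ℝ} {g : ℝ → ℝ≥0∞}

lemma antitone_lintegral_Ioo : Antitone fun x => ∫⁻ z in Ioo x b, g z :=
  fun _ _ hxy => lintegral_mono_set (Ioo_subset_Ioo_left hxy)

lemma lintegral_Ioo_ne_top {C : ℝ≥0∞} (hgC : ∀ x, g x ≤ C) (hC : C ≠ ⊤) (x : ℝ) :
    ∫⁻ z in Ioo x b, g z ≠ ⊤ := by
  refine ne_top_of_le_ne_top (ENNReal.mul_ne_top hC (ENNReal.ofReal_ne_top (r := b - x))) ?_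
  calc ∫⁻ z in Ioo x b, g z ≤ ∫⁻ _ in Ioo x b, C := lintegral_mono hgC
    _ = C * ENNReal.ofReal (b - x) := by rw [setLIntegral_const, Real.volume_Ioo]

lemma lintegral_Ioo_le_lintegral_Ioo_add {C : ℝ≥0∞} (hgC : ∀ x, g x ≤ C) (x y : ℝ) :
    ∫⁻ z in Ioo x b, g z ≤ (∫⁻ z in Ioo y b, g z) + C * ENNReal.ofReal (y - x) := by
  have hsub : Ioo x b ⊆ Ioo y b ∪ Ioc x y := fun z hz => by
    rcases le_or_gt z y with hzy | hyz
    · exact Or.inr ⟨hz.1, hzy⟩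
    · exact Or.inl ⟨hyz, hz.2⟩
  calc ∫⁻ z in Ioo x b, g z ≤ ∫⁻ z in Ioo y b ∪ Ioc x y, g z := lintegral_mono_set hsub
    _ ≤ (∫⁻ z in Ioo y b, g z) + ∫⁻ z in Ioc x y, g z := lintegral_union_le _ _ _
    _ ≤ (∫⁻ z in Ioo y b, g z) + ∫⁻ _ in Ioc x y, C := by gcongr with z; exact hgC z
    _ = (∫⁻ z in Ioo y b, g z) + C * ENNReal.ofReal (y - x) := by
        rw [setLIntegral_const, Real.volume_Ioc]

lemma continuous_toReal_lintegral_Ioo {C : ℝ≥0∞} (hgC : ∀ x, g x ≤ C) (hC : C ≠ ⊤) :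
    Continuous fun x => (∫⁻ z in Ioo x b, g z).toReal := by
  have hfin := lintegral_Ioo_ne_top (b := b) hgC hC
  refine (LipschitzWith.of_le_add_mul C.toNNReal fun x y => ?_).continuous
  have h := ENNReal.toReal_le_add (lintegral_Ioo_le_lintegral_Ioo_add hgC x y) (hfin y)
    (ENNReal.mul_ne_top hC ENNReal.ofReal_ne_top)
  rw [ENNReal.toReal_mul, ENNReal.toReal_ofReal'] at h
  have hdist : max (y - x) 0 ≤ dist x y :=
    max_le ((le_abs_self _).trans_eq (abs_sub_comm _ _)) dist_nonneg
  exact h.trans (by rw [ENNReal.coe_toNNReal_eq_toReal]; gcongr)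

lemma min_le_lintegral_setOf_lintegral_Ioo_le {C : ℝ≥0∞} (hgC : ∀ x, g x ≤ C) (hC : C ≠ ⊤)
    {u : ℝ} (hu : 0 < u) :
    min (ENNReal.ofReal u) (∫⁻ x in Iio b, g x) ≤
      ∫⁻ x in {x | ∫⁻ z in Ioo x b, g z ≤ ENNReal.ofReal u} ∩ Iio b, g x := by
  set F : ℝ → ℝ≥0∞ := fun x => ∫⁻ z in Ioo x b, g z
  by_cases hall : ∀ x < b, F x ≤ ENNReal.ofReal u
  · exact (min_le_right _ _).trans (lintegral_mono_set fun x hx => ⟨hall x hx, hx⟩)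
  push Not at hall
  obtain ⟨x₀, hx₀b, hux₀⟩ := hall
  have hfin := lintegral_Ioo_ne_top (b := b) hgC hC
  have hFb : (F b).toReal = 0 := by simp [F]
  obtain ⟨e, ⟨-, heb⟩, hFe⟩ : u ∈ (fun x => (F x).toReal) '' Icc x₀ b :=
    intermediate_value_Icc' hx₀b.le (continuous_toReal_lintegral_Ioo hgC hC).continuousOn
      ⟨hFb ▸ hu.le, ((ENNReal.ofReal_lt_iff_lt_toReal hu.le (hfin x₀)).1 hux₀).le⟩
  have heb : e < b := heb.lt_of_ne fun heb => by simp [F, heb] at hFe; linarith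
  have hFe : F e = ENNReal.ofReal u := by rw [← hFe, ENNReal.ofReal_toReal (hfin e)]
  calc min (ENNReal.ofReal u) (∫⁻ x in Iio b, g x) ≤ F e := hFe ▸ min_le_left _ _
    _ ≤ _ := lintegral_mono_set (fun y hy => ⟨(antitone_lintegral_Ioo hy.1.le).trans hFe.le, hy.2⟩ :
        Ioo e b ⊆ {x | F x ≤ ENNReal.ofReal u} ∩ Iio b)

end TailIntegral

section ChainRule

variable {s b : ℝ} {g : ℝ → ℝ≥0∞}

theorem rpow_lintegral_Iio_le_lintegral_mul_rpow_lintegral_Ioo (hs0 : 0 < s) (hs1 : s < 1)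
    (hg : Measurable g) {C : ℝ≥0∞} (hgC : ∀ x, g x ≤ C) (hC : C ≠ ⊤) :
    (∫⁻ x in Iio b, g x) ^ s ≤
      ENNReal.ofReal s * ∫⁻ x in Iio b, g x * (∫⁻ z in Ioo x b, g z) ^ (s - 1) := by
  set F : ℝ → ℝ≥0∞ := fun x => ∫⁻ z in Ioo x b, g z
  have hF : Measurable F := antitone_lintegral_Ioo.measurable
  set ν := (volume.restrict (Iio b)).withDensity g
  have hlevel : ∀ u ∈ Ioi (0 : ℝ), min (ENNReal.ofReal u) (∫⁻ x in Iio b, g x) *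
      rpowTailDensity s u ≤ ν {x | F x ≤ ENNReal.ofReal u} * rpowTailDensity s u := by
    intro u hu
    have hmeas : MeasurableSet {x | F x ≤ ENNReal.ofReal u} := measurableSet_le hF measurable_const
    rw [withDensity_apply _ hmeas, Measure.restrict_restrict hmeas]
    gcongr
    exact min_le_lintegral_setOf_lintegral_Ioo_le hgC hC hu
  calc (∫⁻ x in Iio b, g x) ^ s
      ≤ ENNReal.ofReal s * ∫⁻ u in Ioi 0, min (ENNReal.ofReal u) (∫⁻ x in Iio b, g x) *
          rpowTailDensity s u :=
        rpow_le_ofReal_mul_lintegral_min_mul_rpowTailDensity hs0 hs1 _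
    _ ≤ ENNReal.ofReal s * ∫⁻ u in Ioi 0, ν {x | F x ≤ ENNReal.ofReal u} * rpowTailDensity s u := by
        gcongr 1
        exact setLIntegral_mono' measurableSet_Ioi hlevel
    _ ≤ ENNReal.ofReal s * ∫⁻ x, F x ^ (s - 1) ∂ν := by
        gcongr 1
        exact lintegral_meas_le_mul_rpowTailDensity_le ν hs1 hF
    _ = ENNReal.ofReal s * ∫⁻ x in Iio b, g x * F x ^ (s - 1) := by
        rw [lintegral_withDensity_eq_lintegral_mul _ hg (hF.pow_const _)]
        rfl

lemma mul_rpow_lintegral_Ioo_le_of_monotoneOn (hs : s < 1) (hmono : MonotoneOn g (Iio b))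
    {x : ℝ} (hx : x < b) (hgx : g x ≠ ⊤) :
    g x * (∫⁻ z in Ioo x b, g z) ^ (s - 1) ≤ g x ^ s * ENNReal.ofReal (b - x) ^ (s - 1) := by
  rcases eq_or_ne (g x) 0 with hgx0 | hgx0
  · simp [hgx0]
  have hlow : g x * ENNReal.ofReal (b - x) ≤ ∫⁻ z in Ioo x b, g z := by
    rw [← Real.volume_Ioo, ← setLIntegral_const]
    exact setLIntegral_mono' measurableSet_Ioo fun z hz => hmono hx hz.2 hz.1.le
  calc g x * (∫⁻ z in Ioo x b, g z) ^ (s - 1)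
      ≤ g x * (g x * ENNReal.ofReal (b - x)) ^ (s - 1) := by
        gcongr g x * ?_
        exact ENNReal.rpow_le_rpow_of_nonpos hlow (by linarith)
    _ = g x ^ s * ENNReal.ofReal (b - x) ^ (s - 1) := by
        rw [ENNReal.mul_rpow_of_ne_zero hgx0 (ENNReal.ofReal_pos.2 (sub_pos.2 hx)).ne', ← mul_assoc]
        congr 1
        nth_rw 1 [← ENNReal.rpow_one (g x)]
        rw [← ENNReal.rpow_add _ _ hgx0 hgx, add_sub_cancel]

theorem rpow_lintegral_Iio_le_of_monotoneOn (hs0 : 0 < s) (hs1 : s < 1) (hg : Measurable g)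
    (hmono : MonotoneOn g (Iio b)) :
    (∫⁻ x in Iio b, g x) ^ s ≤
      ENNReal.ofReal s * ∫⁻ x in Iio b, g x ^ s * ENNReal.ofReal (b - x) ^ (s - 1) := by
  have htrunc : ∀ n : ℕ, (∫⁻ x in Iio b, min (g x) n) ^ s ≤
      ENNReal.ofReal s * ∫⁻ x in Iio b, g x ^ s * ENNReal.ofReal (b - x) ^ (s - 1) := by
    intro n
    refine (rpow_lintegral_Iio_le_lintegral_mul_rpow_lintegral_Ioo hs0 hs1
      (hg.min measurable_const) (fun x => min_le_right _ _) (ENNReal.natCast_ne_top n)).trans ?_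
    gcongr 1
    refine setLIntegral_mono' measurableSet_Iio fun x hx => ?_
    refine (mul_rpow_lintegral_Ioo_le_of_monotoneOn hs1
      (fun y hy z hz hyz => min_le_min_right _ (hmono hy hz hyz)) hx
      (ne_top_of_le_ne_top (ENNReal.natCast_ne_top n) (min_le_right _ _))).trans ?_
    gcongr
    exact min_le_left _ _
  have hsup : ∫⁻ x in Iio b, g x = ⨆ n : ℕ, ∫⁻ x in Iio b, min (g x) n := by
    rw [← lintegral_iSup (fun n => hg.min measurable_const)
      fun m n hmn x => min_le_min_left _ (Nat.cast_le.2 hmn)]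
    simp_rw [← inf_iSup_eq, ENNReal.iSup_natCast, inf_top_eq]
  rw [hsup, ENNReal.iSup_rpow hs0]
  exact iSup_le htrunc

end ChainRule

theorem integral_pow_le_increasing_general
    (s : ℝ) (hs0 : 0 < s) (hs1 : s < 1) (a : EReal) (b : ℝ)
    (f : ℝ → ℝ) (hf : Measurable f)
    (hpos : ∀ x : ℝ, a < (x : EReal) → x < b → 0 ≤ f x)
    (hinc : ∀ x y : ℝ, a < (x : EReal) → x ≤ y → y < b → f x ≤ f y) :
    (∫⁻ x in {x : ℝ | a < (x : EReal) ∧ x < b}, ENNReal.ofReal (f x)) ^ s ≤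
      ENNReal.ofReal s *
        ∫⁻ x in {x : ℝ | a < (x : EReal) ∧ x < b},
          ENNReal.ofReal (f x ^ s * (b - x) ^ (s - 1)) := by
  set S := {x : ℝ | a < (x : EReal) ∧ x < b}
  have hS : MeasurableSet S :=
    (measurable_coe_real_ereal measurableSet_Ioi).inter measurableSet_Iio
  have hSb : S ∩ Iio b = S := inter_eq_left.2 fun x hx => hx.2
  set g := S.indicator fun x => ENNReal.ofReal (f x)
  have hmono : MonotoneOn g (Iio b) := by
    intro x _ y hy hxy
    by_cases hx : x ∈ S
    · have hy' : y ∈ S := ⟨hx.1.trans_le (EReal.coe_le_coe_iff.2 hxy), hy⟩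
      simp only [g, indicator_of_mem hx, indicator_of_mem hy']
      exact ENNReal.ofReal_le_ofReal (hinc x y hx.1 hxy hy)
    · simp [g, indicator_of_notMem hx]
  have hrhs : ∀ x ∈ Iio b, g x ^ s * ENNReal.ofReal (b - x) ^ (s - 1) =
      S.indicator (fun x => ENNReal.ofReal (f x ^ s * (b - x) ^ (s - 1))) x := by
    intro x hx
    dsimp only [g]
    by_cases hxS : x ∈ S
    · have hfx := hpos x hxS.1 hxS.2
      rw [indicator_of_mem hxS, indicator_of_mem hxS, ENNReal.ofReal_rpow_of_nonneg hfx hs0.le,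
        ENNReal.ofReal_rpow_of_pos (sub_pos.2 hx), ENNReal.ofReal_mul (Real.rpow_nonneg hfx s)]
    · rw [indicator_of_notMem hxS, indicator_of_notMem hxS, ENNReal.zero_rpow_of_pos hs0, zero_mul]
  have key := rpow_lintegral_Iio_le_of_monotoneOn hs0 hs1 (hf.ennreal_ofReal.indicator hS) hmono
  rwa [setLIntegral_congr_fun measurableSet_Iio hrhs, lintegral_indicator hS,
    lintegral_indicator hS, Measure.restrict_restrict hS, hSb] at key

/-- Lemma 3: for `0 < s < 1`, `-∞ ≤ a < b < ∞` and `f` nonnegative and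
nondecreasing on `(a,b)`, `(∫_a^b f)^s ≤ s ∫_a^b f(x)^s (b-x)^{s-1} dx`,
both sides interpreted in `[0,∞]`. -/
theorem integral_pow_le_increasing
    (s : ℝ) (hs0 : 0 < s) (hs1 : s < 1) (a : EReal) (b : ℝ) (hab : a < (b : EReal))
    (f : ℝ → ℝ) (hf : Measurable f)
    (hpos : ∀ x : ℝ, a < (x : EReal) → x < b → 0 ≤ f x)
    (hinc : ∀ x y : ℝ, a < (x : EReal) → x ≤ y → y < b → f x ≤ f y) :
    (∫⁻ x in {x : ℝ | a < (x : EReal) ∧ x < b}, ENNReal.ofReal (f x)) ^ s ≤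
      ENNReal.ofReal s *
        ∫⁻ x in {x : ℝ | a < (x : EReal) ∧ x < b},
          ENNReal.ofReal (f x ^ s * (b - x) ^ (s - 1)) :=
  integral_pow_le_increasing_general s hs0 hs1 a b f hf hpos hinc
end

section
/- (Two-weight inequality for the dual Hardy operator, Theorem 8.) Let p, q : (0, ∞) → ℝ be measurable with 0 < p̲ := ess inf p ≤ p(x) ≤ q(x) ≤ ess sup q =: q̄ < 1 a.e., let r(x) = p̲ p(x)/(p(x) − p̲) (interpreted via the L_∞-norm on the set S₁ = {x : p(x) = p̲}), and let ω₁, ω₂ be weights on (0, ∞). Then there exists a constant C > 0, depending only on p̲, p̄ := ess sup p, q̲ := ess inf q, q̄ and the sets where the exponents coincide, such that for every nonnegative decreasing f ∈ L_{p(x),ω₁}(0, ∞): ‖H*f‖_{q,ω₂,(0,∞)} ≤ C · ‖ t ↦ ‖x ↦ (t − x)^{(p̲−1)/p̲} ω₂(x)/x‖_{q,(0,t)} / ω₁(t) ‖_{r,(0,∞)} · ‖f‖_{p,ω₁,(0,∞)}. -/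
open MeasureTheory ENNReal Set

/-- The modular `∫_E (|g(x)| ω(x))^{s(x)} dx` on a subset of `(0,∞)`. -/
noncomputable def IpwR (E : Set ℝ) (s ω : ℝ → ℝ) (g : ℝ → ℝ) : ℝ≥0∞ :=
  ∫⁻ x in E, ENNReal.ofReal (|g x| * ω x) ^ s x

/-- The quasi-norm `inf {λ > 0 : ∫_E (g(x)/λ)^{s(x)} dx ≤ 1}` for an
`[0,∞]`-valued integrand `g` (for a real `f` with weight `ω`, take
`g x = ENNReal.ofReal (|f x| * ω x)`). -/
noncomputable def NE (E : Set ℝ) (s : ℝ → ℝ) (g : ℝ → ℝ≥0∞) : ℝ≥0∞ :=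
  sInf {lam : ℝ≥0∞ | 0 < lam ∧ ∫⁻ x in E, (g x / lam) ^ s x ≤ 1}

/-- `p̲ = ess inf` of the exponent over `(0,∞)`. -/
noncomputable def plow (p : ℝ → ℝ) : ℝ := essInf p (volume.restrict (Set.Ioi 0))

/-- The dual Hardy operator `H*f(x) = (1/x) ∫ₓ^∞ f(t) dt`, valued in `[0,∞]`. -/
noncomputable def HopDual (f : ℝ → ℝ) (x : ℝ) : ℝ≥0∞ :=
  (∫⁻ t in Set.Ioi x, ENNReal.ofReal (f t)) / ENNReal.ofReal x

/-- The function `t ↦ ‖x ↦ (t-x)^{(p̲-1)/p̲} ω₂(x)/x‖_{q,(0,t)} / ω₁(t)`. -/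
noncomputable def dualHardyWeight (p q ω₁ ω₂ : ℝ → ℝ) (t : ℝ) : ℝ≥0∞ :=
  NE (Set.Ioo 0 t) q
      (fun x => ENNReal.ofReal ((t - x) ^ ((plow p - 1) / plow p) * ω₂ x / x)) /
    ENNReal.ofReal (ω₁ t)

/-- The norm `‖dualHardyWeight‖_{r,(0,∞)}` with `r(x) = p̲ p(x)/(p(x) - p̲)`,
interpreted via the `L_∞`-norm on `S₁ = {x : p(x) = p̲}`. -/
noncomputable def dualHardyWeightNorm (p q ω₁ ω₂ : ℝ → ℝ) : ℝ≥0∞ :=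
  NE {x ∈ Set.Ioi (0 : ℝ) | plow p < p x}
      (fun x => plow p * p x / (p x - plow p)) (dualHardyWeight p q ω₁ ω₂) +
    essSup (dualHardyWeight p q ω₁ ω₂)
      (volume.restrict {x ∈ Set.Ioi (0 : ℝ) | p x = plow p})

/-!
Fix `Λ > 0` and write `s = p̲`, `θ = q / s ≥ 1`. Splitting `(x, ∞)` dyadically, a nonnegative
decreasing `f` satisfies `(∫ₓ^∞ f)^s ≤ 2 ∫ₓ^∞ f(t)^s (t - x)^(s-1) dt`, so
`(ω₂ H*f / Λ)^q ≤ (∫ F(x, t) dt)^θ` with `F(x, t) = 2 f(t)^s K(t, x)^s / Λ^s` for `x < t`, where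
`K(t, ·)` is the function whose `q`-norm over `(0, t)` enters `dualHardyWeight`.

A Minkowski inequality in modular form bounds `∫ (∫ F(x, t) dt)^θ dx` by `1` as soon as there
are scales `λ(t)` with `∫ (F(x, t) / λ(t))^θ dx ≤ 1` and `∫ λ ≤ 1/2`; it is proved by
self-absorption, `∫ H^θ = ∫∫ H^(θ-1) F ≤ ∫ λ(t) (1 + ∫ H^θ) dt`, after truncating `H` to make
`∫ H^θ` finite. The choice `λ(t) ≈ f(t)^s ‖K(t, ·)‖_{q,(0,t)}^s / Λ^s` normalises `F(·, t)`, and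
`∫ λ` is controlled by the Hölder inequality `∫ (f ω₁ · dualHardyWeight)^s ≲ 1` in modular form,
for the exponents `p / s` and `r / s` which are conjugate. Taking `Λ` just above
`2^(4/s) ‖dualHardyWeight‖_r ‖f‖_{p,ω₁}` gives the theorem.
-/

namespace ENNReal

theorem rpow_tsum_le_tsum_rpow_s19 {ι : Type*} (a : ι → ℝ≥0∞) {c : ℝ} (hc0 : 0 < c)
    (hc1 : c ≤ 1) : (∑' i, a i) ^ c ≤ ∑' i, a i ^ c := by
  rw [ENNReal.tsum_eq_iSup_sum, ← orderIsoRpow_apply c hc0, OrderIso.map_iSup]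
  refine iSup_le fun s => ?_
  calc (∑ i ∈ s, a i) ^ c ≤ ∑ i ∈ s, a i ^ c :=
        Finset.le_sum_of_subadditive (· ^ c) (zero_rpow_of_pos hc0).le
          (fun x y => rpow_add_le_add_rpow x y hc0.le hc1) s a
    _ ≤ ∑' i, a i ^ c := ENNReal.sum_le_tsum s

theorem mul_rpow_sub_one_le_rpow_add_rpow (a b : ℝ≥0∞) {θ : ℝ} (hθ : 1 ≤ θ) :
    a * b ^ (θ - 1) ≤ a ^ θ + b ^ θ := by
  calc a * b ^ (θ - 1) ≤ max a b * max a b ^ (θ - 1) :=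
        mul_le_mul' (le_max_left a b) (rpow_le_rpow (le_max_right a b) (by linarith))
    _ = max a b ^ θ := by
        conv_rhs => rw [show θ = 1 + (θ - 1) by ring,
          rpow_add_of_nonneg _ _ zero_le_one (by linarith), rpow_one]
    _ ≤ a ^ θ + b ^ θ := by
        rcases le_total a b with h | h
        · rw [max_eq_right h]; exact le_add_self
        · rw [max_eq_left h]; exact le_self_add

theorem rpow_mul_rpow_le_rpow_add_rpow (a b : ℝ≥0∞) {s p : ℝ} (hs : 0 < s) (hsp : s < p) :
    a ^ s * b ^ s ≤ a ^ p + b ^ (s * p / (p - s)) := by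
  have hpq : (p / s).HolderConjugate (p / (p - s)) :=
    Real.holderConjugate_iff.mpr
      ⟨(one_lt_div hs).2 hsp, by field_simp [(hs.trans hsp).ne']; ring⟩
  have div_le (x : ℝ≥0∞) {r : ℝ} (hr : 1 < r) : x / ENNReal.ofReal r ≤ x :=
    div_le_of_le_mul (le_mul_of_one_le_right' (one_le_ofReal.2 hr.le))
  calc a ^ s * b ^ s
      ≤ (a ^ s) ^ (p / s) / ENNReal.ofReal (p / s) +
          (b ^ s) ^ (p / (p - s)) / ENNReal.ofReal (p / (p - s)) :=
        young_inequality _ _ hpq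
    _ ≤ (a ^ s) ^ (p / s) + (b ^ s) ^ (p / (p - s)) :=
        add_le_add (div_le _ hpq.lt) (div_le _ hpq.symm.lt)
    _ = a ^ p + b ^ (s * p / (p - s)) := by
        rw [← rpow_mul, ← rpow_mul, mul_div_cancel₀ _ hs.ne', mul_div_assoc]

theorem le_mul_mul_of_forall_lt {x c a b : ℝ≥0∞} (hc0 : c ≠ 0) (hc : c ≠ ⊤) (hb0 : b ≠ 0)
    (hb : b ≠ ⊤) (h : ∀ a' > a, ∀ b' > b, a' ≠ ⊤ → b' ≠ ⊤ → x ≤ c * a' * b') :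
    x ≤ c * a * b := by
  rw [mul_assoc, ← ENNReal.div_le_iff' hc0 hc]
  refine le_mul_of_forall_lt (Or.inr hb) (Or.inr hb0) fun a' ha' b' hb' => ?_
  rcases eq_or_ne a' ⊤ with rfl | ha'top
  · rw [top_mul (pos_of_gt hb').ne']; exact le_top
  rcases eq_or_ne b' ⊤ with rfl | hb'top
  · rw [mul_top (pos_of_gt ha').ne']; exact le_top
  rw [ENNReal.div_le_iff' hc0 hc, ← mul_assoc]
  exact h a' ha' b' hb' ha'top hb'top

end ENNReal

theorem lintegral_exp_neg_Ioi_zero :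
    ∫⁻ t in Ioi (0 : ℝ), ENNReal.ofReal (Real.exp (-t)) = 1 := by
  rw [← ofReal_integral_eq_lintegral_ofReal (integrableOn_exp_neg_Ioi 0)
    (Filter.Eventually.of_forall fun t => (Real.exp_pos _).le), integral_exp_neg_Ioi_zero,
    ofReal_one]

section QuasiNorm

variable {E : Set ℝ} {s : ℝ → ℝ} {g : ℝ → ℝ≥0∞}

theorem NE_le_of_lintegral_le_one {lam : ℝ≥0∞} (h0 : 0 < lam)
    (h : ∫⁻ x in E, (g x / lam) ^ s x ≤ 1) : NE E s g ≤ lam :=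
  sInf_le ⟨h0, h⟩

theorem lintegral_le_one_of_NE_lt {lam : ℝ≥0∞} (hs : ∀ᵐ x ∂(volume.restrict E), 0 ≤ s x)
    (h : NE E s g < lam) : ∫⁻ x in E, (g x / lam) ^ s x ≤ 1 := by
  obtain ⟨lam', ⟨-, hlam'⟩, hlt⟩ := sInf_lt_iff.mp h
  refine le_trans (lintegral_mono_ae ?_) hlam'
  filter_upwards [hs] with x hx
  exact rpow_le_rpow (ENNReal.div_le_div_left hlt.le _) hx

theorem NE_ne_top {s₀ : ℝ} (hs₀ : 0 < s₀) (hs : ∀ᵐ x ∂(volume.restrict E), s₀ ≤ s x)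
    (hg : ∫⁻ x in E, g x ^ s x ≠ ⊤) : NE E s g ≠ ⊤ := by
  set M := ∫⁻ x in E, g x ^ s x
  set lam : ℝ≥0∞ := (M + 1) ^ s₀⁻¹
  have hlam : lam ^ s₀ = M + 1 := rpow_inv_rpow hs₀.ne' _
  have hlam1 : 1 ≤ lam := one_le_rpow le_add_self (inv_pos.2 hs₀)
  refine ne_top_of_le_ne_top (rpow_ne_top_of_nonneg (inv_pos.2 hs₀).le (by simp [M, hg]))
    (NE_le_of_lintegral_le_one (zero_lt_one.trans_le hlam1) ?_)
  calc ∫⁻ x in E, (g x / lam) ^ s x ≤ ∫⁻ x in E, g x ^ s x * (lam ^ s₀)⁻¹ := by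
        refine lintegral_mono_ae ?_
        filter_upwards [hs] with x hx
        rw [div_rpow_of_nonneg _ _ (hs₀.le.trans hx), div_eq_mul_inv]
        gcongr
    _ = M / (M + 1) := by rw [lintegral_mul_const' _ _ (by simp [hlam]), hlam, div_eq_mul_inv]
    _ ≤ 1 := ENNReal.div_le_of_le_mul (by rw [one_mul]; exact le_self_add)

theorem ae_eq_zero_of_NE_eq_zero (hsm : Measurable s) (hg : Measurable g)
    (hs : ∀ᵐ x ∂(volume.restrict E), 0 < s x) (h : NE E s g = 0) :
    ∀ᵐ x ∂(volume.restrict E), g x = 0 := by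
  have hmod (n : ℕ) : ∫⁻ x in E, (g x * n) ^ s x ≤ 1 := by
    simpa [div_eq_mul_inv] using lintegral_le_one_of_NE_lt (lam := (n : ℝ≥0∞)⁻¹)
      (hs.mono fun x hx => hx.le) (h ▸ ENNReal.inv_pos.2 (natCast_ne_top n))
  have hmono : ∀ᵐ x ∂(volume.restrict E), Monotone fun n : ℕ => (g x * n) ^ s x := by
    filter_upwards [hs] with x hx n m hnm
    exact rpow_le_rpow (by gcongr) hx.le
  have hsup : ∫⁻ x in E, ⨆ n : ℕ, (g x * n) ^ s x ≠ ⊤ := by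
    rw [lintegral_iSup' (fun n => ((hg.mul_const _).pow hsm).aemeasurable) hmono]
    exact ne_top_of_le_ne_top one_ne_top (iSup_le hmod)
  have hsupm : Measurable fun x => ⨆ n : ℕ, (g x * n) ^ s x :=
    Measurable.iSup fun n => (hg.mul_const _).pow hsm
  filter_upwards [hs, ae_lt_top hsupm hsup] with x hx hfin
  by_contra hx0
  have hpow : ⨆ n : ℕ, (g x * n) ^ s x = (⨆ n : ℕ, g x * n) ^ s x :=
    ((orderIsoRpow _ hx).map_iSup _).symm
  rw [hpow, ← ENNReal.mul_iSup, iSup_natCast, mul_top hx0, top_rpow_of_pos hx] at hfin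
  exact lt_irrefl _ hfin

theorem NE_eq_zero_of_ae_eq_zero (hs : ∀ᵐ x ∂(volume.restrict E), 0 < s x)
    (hg : ∀ᵐ x ∂(volume.restrict E), g x = 0) : NE E s g = 0 := by
  refine nonpos_iff_eq_zero.mp (le_of_forall_gt_imp_ge_of_dense fun lam hlam => ?_)
  refine NE_le_of_lintegral_le_one hlam ?_
  calc ∫⁻ x in E, (g x / lam) ^ s x = ∫⁻ _ in E, 0 := by
        refine lintegral_congr_ae ?_
        filter_upwards [hs, hg] with x hx hgx
        rw [hgx, ENNReal.zero_div, zero_rpow_of_pos hx]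
    _ ≤ 1 := by simp

theorem lintegral_mul_rpow_div_le_one {q θ : ℝ → ℝ} {r : ℝ} (hr : 0 < r)
    (hqθ : ∀ x, q x = r * θ x) (hθ : ∀ᵐ x ∂(volume.restrict E), 0 < θ x) (K : ℝ → ℝ≥0∞)
    {c e : ℝ≥0∞} (hc : c ≠ ⊤) (he : e ≠ 0) :
    ∫⁻ x in E, (c * K x ^ r / (c * NE E q K ^ r + e)) ^ θ x ≤ 1 := by
  set V := NE E q K
  by_cases hdeg : c = 0 ∨ V = ⊤
  · calc ∫⁻ x in E, (c * K x ^ r / (c * V ^ r + e)) ^ θ x = ∫⁻ _ in E, 0 := by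
          refine lintegral_congr_ae ?_
          filter_upwards [hθ] with x hx
          rw [ENNReal.div_eq_zero_iff.2, zero_rpow_of_pos hx]
          by_cases hc0 : c = 0
          · simp [hc0]
          · simp [hdeg.resolve_left hc0, top_rpow_of_pos hr, hc0]
      _ ≤ 1 := by simp
  obtain ⟨hc0, hV⟩ := not_or.mp hdeg
  set X := c * V ^ r + e
  -- at the scale `ρ` the integrand is `(K / ρ) ^ q`, and `ρ` exceeds the quasi-norm `V`
  set ρ := (X / c) ^ r⁻¹
  have hρ : ρ ^ r = X / c := rpow_inv_rpow hr.ne' _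
  have hVρ : V < ρ := by
    rw [← rpow_lt_rpow_iff hr, hρ, ENNReal.lt_div_iff_mul_lt (Or.inl hc0) (Or.inl hc), mul_comm]
    exact ENNReal.lt_add_right (mul_ne_top hc (rpow_ne_top_of_nonneg hr.le hV)) he
  have hq : ∀ᵐ x ∂(volume.restrict E), 0 ≤ q x := by
    filter_upwards [hθ] with x hx
    rw [hqθ]; positivity
  refine le_trans (le_of_eq (lintegral_congr fun x => ?_)) (lintegral_le_one_of_NE_lt hq hVρ)
  rw [show X = c * ρ ^ r by rw [hρ, ENNReal.mul_div_cancel hc0 hc],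
    ENNReal.mul_div_mul_left _ _ hc0 hc, ← div_rpow_of_nonneg _ _ hr.le, ← rpow_mul, hqθ]

end QuasiNorm

theorem lintegral_rpow_mul_le_two {α : Type*} [MeasurableSpace α] {μ : Measure α} {p : α → ℝ}
    {s : ℝ} (hs : 0 < s) (hp : Measurable p) {a b : α → ℝ≥0∞} (ha : Measurable a)
    (hsp : ∀ᵐ x ∂μ, s ≤ p x) (hb1 : ∀ᵐ x ∂μ, p x = s → b x ≤ 1)
    (ha_mod : ∫⁻ x, a x ^ p x ∂μ ≤ 1)
    (hb_mod : ∫⁻ x in {x | s < p x}, b x ^ (s * p x / (p x - s)) ∂μ ≤ 1) :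
    ∫⁻ x, (a x * b x) ^ s ∂μ ≤ 2 := by
  have hS : MeasurableSet {x | s < p x} := measurableSet_lt measurable_const hp
  calc ∫⁻ x, (a x * b x) ^ s ∂μ
      ≤ ∫⁻ x, a x ^ p x +
          {x | s < p x}.indicator (fun x => b x ^ (s * p x / (p x - s))) x ∂μ := by
        refine lintegral_mono_ae ?_
        filter_upwards [hsp, hb1] with x hx hx1
        rw [mul_rpow_of_nonneg _ _ hs.le]
        rcases hx.eq_or_lt with h | h
        · calc a x ^ s * b x ^ s ≤ a x ^ s * 1 := by
                gcongr; exact rpow_le_one (hx1 h.symm) hs.le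
            _ ≤ _ := by rw [mul_one, h]; exact le_self_add
        · rw [indicator_of_mem (show x ∈ {x | s < p x} from h)]
          exact rpow_mul_rpow_le_rpow_add_rpow _ _ hs h
    _ ≤ 1 + 1 := by
        rw [lintegral_add_left (ha.pow hp), lintegral_indicator hS]
        exact add_le_add ha_mod hb_mod
    _ = 2 := one_add_one_eq_two

section Minkowski

variable {α β : Type*} [MeasurableSpace α] [MeasurableSpace β] {μ : Measure α} {ν : Measure β}
  {θ : α → ℝ} {F : α × β → ℝ≥0∞} {lam : β → ℝ≥0∞}

theorem lintegral_rpow_le_one_of_le_lintegral [SFinite μ] [SFinite ν] (hθm : Measurable θ)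
    (hθ : ∀ᵐ x ∂μ, 1 ≤ θ x) (hF : Measurable F) (hlam0 : ∀ᵐ t ∂ν, 0 < lam t)
    (hlam : ∀ᵐ t ∂ν, ∫⁻ x, (F (x, t) / lam t) ^ θ x ∂μ ≤ 1) (hsum : ∫⁻ t, lam t ∂ν ≤ 2⁻¹)
    {b : α → ℝ≥0∞} (hb : Measurable b) (hbF : ∀ x, b x ≤ ∫⁻ t, F (x, t) ∂ν)
    (hfin : ∫⁻ x, b x ^ θ x ∂μ ≠ ⊤) : ∫⁻ x, b x ^ θ x ∂μ ≤ 1 := by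
  set M := ∫⁻ x, b x ^ θ x ∂μ
  have hinner : ∀ᵐ t ∂ν, ∫⁻ x, b x ^ (θ x - 1) * F (x, t) ∂μ ≤ lam t * (1 + M) := by
    filter_upwards [hlam0, hlam] with t ht0 ht
    rcases eq_or_ne (lam t) ⊤ with htop | htop
    · rw [htop, top_mul (by simp)]; exact le_top
    calc ∫⁻ x, b x ^ (θ x - 1) * F (x, t) ∂μ
        ≤ ∫⁻ x, lam t * ((F (x, t) / lam t) ^ θ x + b x ^ θ x) ∂μ := by
          refine lintegral_mono_ae ?_
          filter_upwards [hθ] with x hx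
          calc b x ^ (θ x - 1) * F (x, t) = lam t * (F (x, t) / lam t * b x ^ (θ x - 1)) := by
                rw [← mul_assoc, ENNReal.mul_div_cancel ht0.ne' htop, mul_comm]
            _ ≤ _ := by gcongr; exact mul_rpow_sub_one_le_rpow_add_rpow _ _ hx
      _ = lam t * (∫⁻ x, (F (x, t) / lam t) ^ θ x ∂μ + M) := by
          rw [lintegral_const_mul' _ _ htop, lintegral_add_left (by fun_prop)]
      _ ≤ lam t * (1 + M) := by gcongr
  have hM : M ≤ 2⁻¹ * (1 + M) := calc
    M ≤ ∫⁻ x, b x ^ (θ x - 1) * ∫⁻ t, F (x, t) ∂ν ∂μ := by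
        refine lintegral_mono_ae ?_
        filter_upwards [hθ] with x hx
        calc b x ^ θ x = b x ^ (θ x - 1) * b x := by
              conv_lhs => rw [show θ x = (θ x - 1) + 1 by ring,
                rpow_add_of_nonneg _ _ (by linarith) zero_le_one, rpow_one]
          _ ≤ _ := by gcongr; exact hbF x
    _ = ∫⁻ t, ∫⁻ x, b x ^ (θ x - 1) * F (x, t) ∂μ ∂ν := by
        refine (lintegral_congr fun x =>
          (lintegral_const_mul _ (hF.comp measurable_prodMk_left)).symm).trans ?_
        exact lintegral_lintegral_swap (((hb.comp measurable_fst).pow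
          ((hθm.comp measurable_fst).sub_const 1)).mul hF).aemeasurable
    _ ≤ ∫⁻ t, lam t * (1 + M) ∂ν := lintegral_mono_ae hinner
    _ = (∫⁻ t, lam t ∂ν) * (1 + M) := lintegral_mul_const' _ _ (by simp [hfin])
    _ ≤ 2⁻¹ * (1 + M) := by gcongr
  have h2 : M + M ≤ 1 + M := calc
    M + M = 2 * M := (two_mul M).symm
    _ ≤ 2 * (2⁻¹ * (1 + M)) := by gcongr
    _ = 1 + M := by rw [← mul_assoc, ENNReal.mul_inv_cancel two_ne_zero ofNat_ne_top, one_mul]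
  exact (ENNReal.add_le_add_iff_right hfin).1 h2

noncomputable def modularTruncation (μ : Measure α) [SigmaFinite μ] (θ : α → ℝ) (H : α → ℝ≥0∞)
    (n : ℕ) : α → ℝ≥0∞ :=
  (spanningSets μ n ∩ {x | θ x ≤ n}).indicator fun x => min (H x) n

section Truncation

variable [SigmaFinite μ] {H : α → ℝ≥0∞}

theorem measurable_modularTruncation (hθm : Measurable θ) (hH : Measurable H) (n : ℕ) :
    Measurable (modularTruncation μ θ H n) :=
  (hH.min measurable_const).indicator
    ((measurableSet_spanningSets μ n).inter (measurableSet_le hθm measurable_const))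

theorem modularTruncation_le (n : ℕ) (x : α) : modularTruncation μ θ H n x ≤ H x :=
  indicator_le (fun _ _ => min_le_left _ _) x

theorem monotone_modularTruncation (x : α) : Monotone fun n => modularTruncation μ θ H n x := by
  intro n m hnm
  by_cases hx : x ∈ spanningSets μ n ∩ {x | θ x ≤ n}
  · have hx' : x ∈ spanningSets μ m ∩ {x | θ x ≤ m} :=
      ⟨monotone_spanningSets μ hnm hx.1, show θ x ≤ m from hx.2.out.trans (Nat.cast_le.2 hnm)⟩
    simp only [modularTruncation, indicator_of_mem hx, indicator_of_mem hx']
    gcongr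
  · simp only [modularTruncation, indicator_of_notMem hx, zero_le]

theorem iSup_modularTruncation (x : α) : ⨆ n, modularTruncation μ θ H n x = H x := by
  refine le_antisymm (iSup_le fun n => modularTruncation_le n x) ?_
  set N := max (spanningSetsIndex μ x) ⌈θ x⌉₊
  have hN (n : ℕ) : modularTruncation μ θ H (max n N) x = min (H x) (max n N : ℕ) := by
    have hx : x ∈ spanningSets μ (max n N) ∩ {x | θ x ≤ (max n N : ℕ)} :=
      ⟨monotone_spanningSets μ ((le_max_left _ _).trans (le_max_right n N))
        (mem_spanningSetsIndex μ x), show θ x ≤ _ from (Nat.le_ceil _).trans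
          (Nat.cast_le.2 ((le_max_right _ _).trans (le_max_right n N)))⟩
    exact indicator_of_mem hx _
  calc H x = ⨆ n : ℕ, min (H x) n := by rw [← inf_iSup_eq, iSup_natCast, min_top_right]
    _ ≤ ⨆ n, modularTruncation μ θ H n x := iSup_le fun n => le_iSup_of_le (max n N) <| by
        rw [hN]
        gcongr
        exact Nat.cast_le.2 (le_max_left n N)

theorem lintegral_modularTruncation_rpow_ne_top (hθ : ∀ᵐ x ∂μ, 1 ≤ θ x) (n : ℕ) :
    ∫⁻ x, modularTruncation μ θ H n x ^ θ x ∂μ ≠ ⊤ := by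
  set S := spanningSets μ n ∩ {x | θ x ≤ n}
  have hS : μ S ≠ ⊤ :=
    ne_top_of_le_ne_top (measure_spanningSets_lt_top μ n).ne (measure_mono inter_subset_left)
  have hc : ((n : ℝ≥0∞) + 1) ^ (n : ℝ) ≠ ⊤ := rpow_ne_top_of_nonneg n.cast_nonneg (by simp)
  refine ne_top_of_le_ne_top (mul_ne_top hc hS)
    ((lintegral_mono_ae ?_).trans (lintegral_indicator_const_le S _))
  filter_upwards [hθ] with x hx
  by_cases hxS : x ∈ S
  · simp only [modularTruncation, S, indicator_of_mem hxS]
    calc min (H x) n ^ θ x ≤ ((n : ℝ≥0∞) + 1) ^ θ x :=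
          rpow_le_rpow ((min_le_right _ _).trans le_self_add) (by linarith)
      _ ≤ ((n : ℝ≥0∞) + 1) ^ (n : ℝ) := rpow_le_rpow_of_exponent_le le_add_self hxS.2
  · simp [modularTruncation, S, indicator_of_notMem hxS, zero_rpow_of_pos (zero_lt_one.trans_le hx)]

end Truncation

theorem lintegral_lintegral_rpow_le_one [SigmaFinite μ] [SFinite ν] (hθm : Measurable θ)
    (hθ : ∀ᵐ x ∂μ, 1 ≤ θ x) (hF : Measurable F) (hlam0 : ∀ᵐ t ∂ν, 0 < lam t)
    (hlam : ∀ᵐ t ∂ν, ∫⁻ x, (F (x, t) / lam t) ^ θ x ∂μ ≤ 1) (hsum : ∫⁻ t, lam t ∂ν ≤ 2⁻¹) :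
    ∫⁻ x, (∫⁻ t, F (x, t) ∂ν) ^ θ x ∂μ ≤ 1 := by
  set H := fun x => ∫⁻ t, F (x, t) ∂ν
  have hH : Measurable H := hF.lintegral_prod_right'
  calc ∫⁻ x, H x ^ θ x ∂μ = ∫⁻ x, ⨆ n, modularTruncation μ θ H n x ^ θ x ∂μ := by
        refine lintegral_congr_ae ?_
        filter_upwards [hθ] with x hx
        rw [← iSup_modularTruncation (μ := μ) (θ := θ) (H := H) x]
        exact (orderIsoRpow _ (zero_lt_one.trans_le hx)).map_iSup _
    _ = ⨆ n, ∫⁻ x, modularTruncation μ θ H n x ^ θ x ∂μ := by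
        refine lintegral_iSup'
          (fun n => ((measurable_modularTruncation hθm hH n).pow hθm).aemeasurable) ?_
        filter_upwards [hθ] with x hx n m hnm
        exact rpow_le_rpow (monotone_modularTruncation x hnm) (by linarith)
    _ ≤ 1 := iSup_le fun n => lintegral_rpow_le_one_of_le_lintegral hθm hθ hF hlam0 hlam hsum
        (measurable_modularTruncation hθm hH n) (modularTruncation_le n)
        (lintegral_modularTruncation_rpow_ne_top hθ n)

end Minkowski

section Dyadic

theorem iUnion_Ioc_add_zpow_two (x : ℝ) :
    ⋃ k : ℤ, Ioc (x + 2 ^ k) (x + 2 ^ (k + 1)) = Ioi x := by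
  ext t
  simp only [mem_iUnion, mem_Ioc, mem_Ioi]
  constructor
  · rintro ⟨k, hk, -⟩
    linarith [zpow_pos (two_pos (α := ℝ)) k]
  · intro ht
    obtain ⟨k, hk⟩ := exists_mem_Ioc_zpow (sub_pos.2 ht) (one_lt_two (α := ℝ))
    exact ⟨k, by linarith [hk.1], by linarith [hk.2]⟩

theorem pairwise_disjoint_Ioc_add_zpow_two (x : ℝ) :
    Pairwise (Function.onFun Disjoint fun k : ℤ => Ioc (x + 2 ^ k) (x + 2 ^ (k + 1))) := by
  have hmono : Monotone fun k : ℤ => x + (2 : ℝ) ^ k := fun m n h =>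
    add_le_add_right (zpow_le_zpow_right₀ one_le_two h) x
  simpa [Order.succ_eq_add_one] using hmono.pairwise_disjoint_on_Ioc_succ

theorem lintegral_Ioi_eq_tsum_Ioc_add_zpow_two (x : ℝ) (g : ℝ → ℝ≥0∞) :
    ∫⁻ t in Ioi x, g t = ∑' k : ℤ, ∫⁻ t in Ioc (x + 2 ^ k) (x + 2 ^ (k + 1)), g t := by
  rw [← iUnion_Ioc_add_zpow_two x, Measure.restrict_iUnion (pairwise_disjoint_Ioc_add_zpow_two x)
    fun k => measurableSet_Ioc, lintegral_sum_measure]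

variable {g : ℝ → ℝ≥0∞} {x a : ℝ}

theorem setLIntegral_Ioc_le_of_antitoneOn (hg : AntitoneOn g (Ioi x)) (ha : 0 < a) :
    ∫⁻ t in Ioc (x + a) (x + a * 2), g t ≤ ENNReal.ofReal a * g (x + a) := by
  have hxa : x + a ∈ Ioi x := by simp [ha]
  calc ∫⁻ t in Ioc (x + a) (x + a * 2), g t ≤ ∫⁻ _ in Ioc (x + a) (x + a * 2), g (x + a) :=
        setLIntegral_mono' measurableSet_Ioc fun t ht =>
          hg hxa (mem_Ioi.2 (hxa.out.trans ht.1)) ht.1.le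
    _ = ENNReal.ofReal a * g (x + a) := by
        rw [setLIntegral_const, Real.volume_Ioc, mul_comm]
        ring_nf

theorem rpow_le_setLIntegral_Ioc_of_antitoneOn (hg : AntitoneOn g (Ioi x)) (ha : 0 < a) {c : ℝ}
    (hc0 : 0 < c) (hc1 : c ≤ 1) :
    (ENNReal.ofReal (a * 2) * g (x + a * 2)) ^ c ≤
      2 * ∫⁻ t in Ioc (x + a) (x + a * 2), g t ^ c * ENNReal.ofReal (t - x) ^ (c - 1) := by
  have hxa : x + a * 2 ∈ Ioi x := by simp [ha]
  have h2a : ENNReal.ofReal (a * 2) ^ c =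
      ENNReal.ofReal (a * 2) * ENNReal.ofReal (a * 2) ^ (c - 1) := by
    conv_lhs => rw [show c = 1 + (c - 1) by ring,
      rpow_add _ _ (by simp [ha]) ofReal_ne_top, rpow_one]
  calc (ENNReal.ofReal (a * 2) * g (x + a * 2)) ^ c
      = 2 * ∫⁻ _ in Ioc (x + a) (x + a * 2),
          g (x + a * 2) ^ c * ENNReal.ofReal (a * 2) ^ (c - 1) := by
        rw [setLIntegral_const, Real.volume_Ioc, mul_rpow_of_nonneg _ _ hc0.le, h2a,
          show x + a * 2 - (x + a) = a by ring]
        nth_rw 1 [ofReal_mul ha.le]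
        rw [ofReal_ofNat]
        ring
    _ ≤ _ := by
        gcongr 2 * ?_
        refine setLIntegral_mono' measurableSet_Ioc fun t ht => ?_
        have htx : 0 < t - x := by linarith [ht.1]
        refine mul_le_mul' (rpow_le_rpow (hg (mem_Ioi.2 (by linarith [ht.1])) hxa ht.2) hc0.le) ?_
        rw [ofReal_rpow_of_pos htx, ofReal_rpow_of_pos (by positivity)]
        exact ofReal_le_ofReal (Real.rpow_le_rpow_of_nonpos htx (by linarith [ht.2]) (by linarith))

theorem lintegral_Ioi_rpow_le_of_antitoneOn (hg : AntitoneOn g (Ioi x)) {c : ℝ} (hc0 : 0 < c)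
    (hc1 : c ≤ 1) :
    (∫⁻ t in Ioi x, g t) ^ c ≤ 2 * ∫⁻ t in Ioi x, g t ^ c * ENNReal.ofReal (t - x) ^ (c - 1) := by
  have hpow (k : ℤ) : (2 : ℝ) ^ (k + 1) = 2 ^ k * 2 := zpow_add_one₀ two_ne_zero k
  calc (∫⁻ t in Ioi x, g t) ^ c
      ≤ (∑' k : ℤ, ENNReal.ofReal (2 ^ k) * g (x + 2 ^ k)) ^ c := by
        rw [lintegral_Ioi_eq_tsum_Ioc_add_zpow_two]
        gcongr with k
        rw [hpow]
        exact setLIntegral_Ioc_le_of_antitoneOn hg (zpow_pos two_pos k)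
    _ ≤ ∑' k : ℤ, (ENNReal.ofReal (2 ^ k) * g (x + 2 ^ k)) ^ c :=
        rpow_tsum_le_tsum_rpow_s19 _ hc0 hc1
    _ = ∑' k : ℤ, (ENNReal.ofReal (2 ^ k * 2) * g (x + 2 ^ k * 2)) ^ c := by
        rw [← (Equiv.addRight (1 : ℤ)).tsum_eq]
        simp only [Equiv.coe_addRight, hpow]
    _ ≤ ∑' k : ℤ, 2 * ∫⁻ t in Ioc (x + 2 ^ k) (x + 2 ^ (k + 1)),
          g t ^ c * ENNReal.ofReal (t - x) ^ (c - 1) := by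
        gcongr with k
        rw [hpow]
        exact rpow_le_setLIntegral_Ioc_of_antitoneOn hg (zpow_pos two_pos k) hc0 hc1
    _ = 2 * ∫⁻ t in Ioi x, g t ^ c * ENNReal.ofReal (t - x) ^ (c - 1) := by
        rw [ENNReal.tsum_mul_left, lintegral_Ioi_eq_tsum_Ioc_add_zpow_two]

end Dyadic

section DualHardy

-- `dualHardyWeight p q ω₁ ω₂ t` unfolds to
-- `NE (Ioo 0 t) q (dualHardyKernel (plow p) ω₂ t) / ENNReal.ofReal (ω₁ t)`
noncomputable def dualHardyKernel (s : ℝ) (ω : ℝ → ℝ) (t x : ℝ) : ℝ≥0∞ :=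
  ENNReal.ofReal ((t - x) ^ ((s - 1) / s) * ω x / x)

variable {p q ω₁ ω₂ f : ℝ → ℝ} {s : ℝ} {ω : ℝ → ℝ}

theorem dualHardyKernel_rpow (hs : 0 < s) {t x : ℝ} (hx : 0 < x) (hxt : x < t) :
    dualHardyKernel s ω t x ^ s =
      ENNReal.ofReal (t - x) ^ (s - 1) * (ENNReal.ofReal (ω x) / ENNReal.ofReal x) ^ s := by
  have htx : 0 < t - x := sub_pos.2 hxt
  rw [dualHardyKernel, ofReal_div_of_pos hx, ofReal_mul (by positivity), mul_div_assoc,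
    mul_rpow_of_nonneg _ _ hs.le, ← ofReal_rpow_of_pos htx, ← rpow_mul,
    div_mul_cancel₀ _ hs.ne']

theorem rpow_mul_HopDual_le (hf : AntitoneOn f (Ioi 0)) (hs0 : 0 < s) (hs1 : s ≤ 1) {x : ℝ}
    (hx : 0 < x) :
    (ENNReal.ofReal (ω x) * HopDual f x) ^ s ≤
      ∫⁻ t in Ioi x, 2 * ENNReal.ofReal (f t) ^ s * dualHardyKernel s ω t x ^ s := by
  have hfx : AntitoneOn (fun t => ENNReal.ofReal (f t)) (Ioi x) :=
    fun a ha b hb hab =>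
      ofReal_le_ofReal (hf (Ioi_subset_Ioi hx.le ha) (Ioi_subset_Ioi hx.le hb) hab)
  have hωx : (ENNReal.ofReal (ω x) / ENNReal.ofReal x) ^ s ≠ ⊤ :=
    rpow_ne_top_of_nonneg hs0.le (div_ne_top ofReal_ne_top (by simp [hx]))
  calc (ENNReal.ofReal (ω x) * HopDual f x) ^ s
      = (ENNReal.ofReal (ω x) / ENNReal.ofReal x) ^ s *
          (∫⁻ t in Ioi x, ENNReal.ofReal (f t)) ^ s := by
        rw [HopDual, ← mul_rpow_of_nonneg _ _ hs0.le, div_eq_mul_inv, div_eq_mul_inv]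
        ring_nf
    _ ≤ (ENNReal.ofReal (ω x) / ENNReal.ofReal x) ^ s *
          (2 * ∫⁻ t in Ioi x, ENNReal.ofReal (f t) ^ s * ENNReal.ofReal (t - x) ^ (s - 1)) := by
        gcongr
        exact lintegral_Ioi_rpow_le_of_antitoneOn hfx hs0 hs1
    _ = ∫⁻ t in Ioi x, 2 * ENNReal.ofReal (f t) ^ s * dualHardyKernel s ω t x ^ s := by
        rw [← lintegral_const_mul' _ _ ofNat_ne_top, ← lintegral_const_mul' _ _ hωx]
        refine setLIntegral_congr_fun measurableSet_Ioi fun t ht => ?_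
        rw [dualHardyKernel_rpow hs0 hx ht]
        ring

noncomputable def dualHardyMajorant (s : ℝ) (ω f : ℝ → ℝ) (Λ : ℝ≥0∞) (z : ℝ × ℝ) : ℝ≥0∞ :=
  {z : ℝ × ℝ | z.1 < z.2}.indicator
    (fun z => 2 * ENNReal.ofReal (f z.2) ^ s / Λ ^ s * dualHardyKernel s ω z.2 z.1 ^ s) z

theorem measurable_dualHardyMajorant (hω : Measurable ω) (hf : Measurable f) (Λ : ℝ≥0∞) :
    Measurable (dualHardyMajorant s ω f Λ) := by
  refine Measurable.indicator ?_ (measurableSet_lt measurable_fst measurable_snd)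
  unfold dualHardyKernel
  fun_prop

theorem rpow_mul_HopDual_div_le (hf : AntitoneOn f (Ioi 0)) (hs0 : 0 < s) (hs1 : s ≤ 1)
    (Λ : ℝ≥0∞) {x : ℝ} (hx : 0 < x) :
    (ENNReal.ofReal (ω x) * HopDual f x / Λ) ^ s ≤
      ∫⁻ t in Ioi 0, dualHardyMajorant s ω f Λ (x, t) := by
  calc (ENNReal.ofReal (ω x) * HopDual f x / Λ) ^ s
      ≤ (∫⁻ t in Ioi x, 2 * ENNReal.ofReal (f t) ^ s * dualHardyKernel s ω t x ^ s) *
          (Λ ^ s)⁻¹ := by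
        rw [div_rpow_of_nonneg _ _ hs0.le, div_eq_mul_inv]
        gcongr
        exact rpow_mul_HopDual_le hf hs0 hs1 hx
    _ ≤ ∫⁻ t in Ioi x, dualHardyMajorant s ω f Λ (x, t) := by
        refine lintegral_mul_const_le _ _ |>.trans_eq (setLIntegral_congr_fun measurableSet_Ioi
          fun t (ht : x < t) => ?_)
        rw [dualHardyMajorant, indicator_of_mem (show (x, t) ∈ {z : ℝ × ℝ | z.1 < z.2} from ht),
          div_eq_mul_inv]
        ring
    _ ≤ ∫⁻ t in Ioi 0, dualHardyMajorant s ω f Λ (x, t) :=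
        lintegral_mono_set (Ioi_subset_Ioi hx.le)

theorem lintegral_dualHardyMajorant_div_rpow_le_one {θ : ℝ → ℝ} (hs : 0 < s)
    (hqθ : ∀ x, q x = s * θ x) (hθ : ∀ᵐ x ∂(volume.restrict (Ioi 0)), 0 < θ x) {Λ : ℝ≥0∞}
    (hΛ : Λ ≠ 0) (t : ℝ) {e : ℝ≥0∞} (he : e ≠ 0) :
    ∫⁻ x in Ioi 0, (dualHardyMajorant s ω f Λ (x, t) /
      (2 * ENNReal.ofReal (f t) ^ s / Λ ^ s * NE (Ioo 0 t) q (dualHardyKernel s ω t) ^ s + e))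
        ^ θ x ≤ 1 := by
  set c := 2 * ENNReal.ofReal (f t) ^ s / Λ ^ s
  have hc : c ≠ ⊤ :=
    div_ne_top (mul_ne_top ofNat_ne_top (rpow_ne_top_of_nonneg hs.le ofReal_ne_top))
      (rpow_pos_of_nonneg (pos_iff_ne_zero.2 hΛ) hs.le).ne'
  calc _ ≤ ∫⁻ x in Ioi 0, (Iio t).indicator (fun x =>
          (c * dualHardyKernel s ω t x ^ s / (c * NE (Ioo 0 t) q (dualHardyKernel s ω t) ^ s + e))
            ^ θ x) x := by
        refine lintegral_mono_ae ?_
        filter_upwards [hθ] with x hx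
        by_cases hxt : x < t
        · rw [dualHardyMajorant,
            indicator_of_mem (show (x, t) ∈ {z : ℝ × ℝ | z.1 < z.2} from hxt),
            indicator_of_mem (show x ∈ Iio t from hxt)]
        · rw [dualHardyMajorant,
            indicator_of_notMem (show (x, t) ∉ {z : ℝ × ℝ | z.1 < z.2} from hxt),
            ENNReal.zero_div, zero_rpow_of_pos hx]
          exact zero_le
    _ ≤ 1 := by
        rw [lintegral_indicator measurableSet_Iio, Measure.restrict_restrict measurableSet_Iio,
          Iio_inter_Ioi]
        exact lintegral_mul_rpow_div_le_one hs hqθ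
          (ae_restrict_of_ae_restrict_of_subset Ioo_subset_Ioi_self hθ) _ hc he

theorem ae_dualHardyWeight_div_le_one (hp : Measurable p) {B : ℝ≥0∞}
    (hB : dualHardyWeightNorm p q ω₁ ω₂ < B) :
    ∀ᵐ t ∂(volume.restrict (Ioi 0)), p t = plow p → dualHardyWeight p q ω₁ ω₂ t / B ≤ 1 := by
  have hS₁ : MeasurableSet {x ∈ Ioi (0 : ℝ) | p x = plow p} :=
    measurableSet_Ioi.inter (hp (measurableSet_singleton _))
  have h := (ae_restrict_iff' (μ := volume) hS₁).1
    (ENNReal.ae_le_essSup (dualHardyWeight p q ω₁ ω₂))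
  filter_upwards [ae_restrict_of_ae h, ae_restrict_mem measurableSet_Ioi] with t ht ht0 hpt
  refine ENNReal.div_le_of_le_mul ?_
  rw [one_mul]
  exact (ht ⟨ht0, hpt⟩).trans (lt_of_le_of_lt le_add_self hB).le

theorem lintegral_dualHardyWeight_div_rpow_le_one (hp : Measurable p) (hpl : 0 < plow p)
    {B : ℝ≥0∞} (hB : dualHardyWeightNorm p q ω₁ ω₂ < B) :
    ∫⁻ x in {x | plow p < p x}, (dualHardyWeight p q ω₁ ω₂ x / B) ^ (plow p * p x / (p x - plow p))
      ∂(volume.restrict (Ioi 0)) ≤ 1 := by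
  have hS₂ : MeasurableSet {x | plow p < p x} := measurableSet_lt measurable_const hp
  rw [Measure.restrict_restrict hS₂, inter_comm]
  refine lintegral_le_one_of_NE_lt ?_ (lt_of_le_of_lt le_self_add hB)
  refine (ae_restrict_iff' (measurableSet_Ioi.inter hS₂)).2
    (Filter.Eventually.of_forall fun x hx => ?_)
  exact div_nonneg (mul_nonneg hpl.le (hpl.le.trans hx.2.le)) (sub_pos.2 hx.2).le

theorem lintegral_rpow_mul_NE_dualHardyKernel_le (hp : Measurable p)
    (hω₁m : Measurable ω₁) (hfm : Measurable f) (hpl : 0 < plow p)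
    (hb : ∀ᵐ x ∂(volume.restrict (Ioi 0)), plow p ≤ p x)
    (hω₁ : ∀ᵐ x ∂(volume.restrict (Ioi 0)), 0 < ω₁ x) (hf0 : ∀ x ∈ Ioi (0 : ℝ), 0 ≤ f x)
    {B M : ℝ≥0∞} (hB : dualHardyWeightNorm p q ω₁ ω₂ < B) (hB' : B ≠ ⊤)
    (hM : NE (Ioi 0) p (fun x => ENNReal.ofReal (|f x| * ω₁ x)) < M) (hM' : M ≠ ⊤) :
    ∫⁻ t in Ioi 0, (ENNReal.ofReal (f t) * NE (Ioo 0 t) q (dualHardyKernel (plow p) ω₂ t))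
      ^ plow p ≤ 2 * (M * B) ^ plow p := by
  set s := plow p
  set g := fun x => ENNReal.ofReal (|f x| * ω₁ x)
  set D := dualHardyWeight p q ω₁ ω₂
  have hB0 : B ≠ 0 := (pos_of_gt hB).ne'
  have hM0 : M ≠ 0 := (pos_of_gt hM).ne'
  have hg_mod : ∫⁻ x in Ioi 0, (g x / M) ^ p x ≤ 1 :=
    lintegral_le_one_of_NE_lt (hb.mono fun x hx => hpl.le.trans hx) hM
  have hcancel (a V w : ℝ≥0∞) (hw0 : w ≠ 0) (hw : w ≠ ⊤) :
      a * V = M * B * (a * w / M * (V / w / B)) := by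
    simp only [div_eq_mul_inv]
    calc a * V = (M * M⁻¹) * (B * B⁻¹) * (w * w⁻¹) * (a * V) := by
          rw [ENNReal.mul_inv_cancel hM0 hM', ENNReal.mul_inv_cancel hB0 hB',
            ENNReal.mul_inv_cancel hw0 hw]
          simp
      _ = _ := by ring
  calc ∫⁻ t in Ioi 0, (ENNReal.ofReal (f t) * NE (Ioo 0 t) q (dualHardyKernel s ω₂ t)) ^ s
      = ∫⁻ t in Ioi 0, (M * B) ^ s * (g t / M * (D t / B)) ^ s := by
        refine lintegral_congr_ae ?_
        filter_upwards [hω₁, ae_restrict_mem measurableSet_Ioi] with t hω ht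
        have hW : ENNReal.ofReal (ω₁ t) ≠ 0 := by simp [hω]
        rw [← mul_rpow_of_nonneg _ _ hpl.le]
        congr 1
        rw [show g t = ENNReal.ofReal (f t) * ENNReal.ofReal (ω₁ t) by
          simp only [g, abs_of_nonneg (hf0 t ht), ofReal_mul (hf0 t ht)]]
        exact hcancel _ _ _ hW ofReal_ne_top
    _ = (M * B) ^ s * ∫⁻ t in Ioi 0, (g t / M * (D t / B)) ^ s :=
        lintegral_const_mul' _ _ (rpow_ne_top_of_nonneg hpl.le (mul_ne_top hM' hB'))
    _ ≤ (M * B) ^ s * 2 := by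
        gcongr
        exact lintegral_rpow_mul_le_two hpl hp (by fun_prop) hb
          (ae_dualHardyWeight_div_le_one hp hB) hg_mod
          (lintegral_dualHardyWeight_div_rpow_le_one hp hpl hB)
    _ = 2 * (M * B) ^ s := mul_comm _ _

-- The integrand is the scale `λ(t)` fed to the Minkowski inequality: the summand `exp (-t) / 4`
-- keeps it positive, and `2 ^ (4 / p̲)` makes each of the two parts of `∫ λ` at most `1/4`.
theorem lintegral_dualHardy_scale_le (hp : Measurable p)
    (hω₁m : Measurable ω₁) (hfm : Measurable f) (hpl : 0 < plow p)
    (hb : ∀ᵐ x ∂(volume.restrict (Ioi 0)), plow p ≤ p x)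
    (hω₁ : ∀ᵐ x ∂(volume.restrict (Ioi 0)), 0 < ω₁ x) (hf0 : ∀ x ∈ Ioi (0 : ℝ), 0 ≤ f x)
    {B M : ℝ≥0∞} (hB : dualHardyWeightNorm p q ω₁ ω₂ < B) (hB' : B ≠ ⊤)
    (hM : NE (Ioi 0) p (fun x => ENNReal.ofReal (|f x| * ω₁ x)) < M) (hM' : M ≠ ⊤) :
    ∫⁻ t in Ioi 0, (2 * ENNReal.ofReal (f t) ^ plow p /
        (ENNReal.ofReal (2 ^ (4 / plow p)) * B * M) ^ plow p *
        NE (Ioo 0 t) q (dualHardyKernel (plow p) ω₂ t) ^ plow p +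
      4⁻¹ * ENNReal.ofReal (Real.exp (-t))) ≤ 2⁻¹ := by
  set s := plow p
  set X := (M * B) ^ s
  have hX0 : X ≠ 0 :=
    (rpow_pos_of_nonneg (mul_pos (pos_of_gt hM).ne' (pos_of_gt hB).ne') hpl.le).ne'
  have hX : X ≠ ⊤ := rpow_ne_top_of_nonneg hpl.le (mul_ne_top hM' hB')
  have hΛ : (ENNReal.ofReal (2 ^ (4 / s)) * B * M) ^ s = 16 * X := by
    rw [mul_assoc, mul_rpow_of_nonneg _ _ hpl.le, mul_comm B M,
      ofReal_rpow_of_nonneg (by positivity) hpl.le, ← Real.rpow_mul zero_le_two,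
      div_mul_cancel₀ _ hpl.ne']
    norm_num [X]
  have h16 : (16 : ℝ≥0∞) * X ≠ 0 := mul_ne_zero (by norm_num) hX0
  rw [lintegral_add_right _ (by fun_prop), lintegral_const_mul _ (by fun_prop),
    lintegral_exp_neg_Ioi_zero, mul_one]
  calc (∫⁻ t in Ioi 0, 2 * ENNReal.ofReal (f t) ^ s /
          (ENNReal.ofReal (2 ^ (4 / s)) * B * M) ^ s * NE (Ioo 0 t) q (dualHardyKernel s ω₂ t) ^ s)
        + 4⁻¹
      = 2 / (16 * X) * (∫⁻ t in Ioi 0,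
          (ENNReal.ofReal (f t) * NE (Ioo 0 t) q (dualHardyKernel s ω₂ t)) ^ s) + 4⁻¹ := by
        rw [hΛ, ← lintegral_const_mul' _ _ (div_ne_top ofNat_ne_top h16)]
        congr 1
        refine lintegral_congr fun t => ?_
        rw [mul_rpow_of_nonneg _ _ hpl.le, div_eq_mul_inv, div_eq_mul_inv]
        ring
    _ ≤ 2 / (16 * X) * (2 * X) + 4⁻¹ := by
        gcongr
        exact lintegral_rpow_mul_NE_dualHardyKernel_le hp hω₁m hfm hpl hb hω₁ hf0 hB hB' hM hM'
    _ = 4⁻¹ + 4⁻¹ := by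
        congr 1
        rw [div_eq_mul_inv, mul_comm, ← mul_assoc, show 2 * X * 2 = 4 * X by ring,
          ← div_eq_mul_inv, ENNReal.mul_div_mul_right _ _ hX0 hX,
          show (16 : ℝ≥0∞) = 4 * 4 by norm_num, ENNReal.div_eq_inv_mul,
          ENNReal.mul_inv (by simp) (by simp), mul_assoc,
          ENNReal.inv_mul_cancel (by simp) (by simp), mul_one]
    _ = 2⁻¹ := by
        rw [show (4 : ℝ≥0∞) = 2 * 2 by norm_num, ENNReal.mul_inv (by simp) (by simp), ← add_mul,
          ENNReal.inv_two_add_inv_two, one_mul]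

theorem NE_mul_HopDual_le (hp : Measurable p) (hq : Measurable q)
    (hω₁m : Measurable ω₁) (hω₂m : Measurable ω₂) (hfm : Measurable f) (hpl : 0 < plow p)
    (hpl1 : plow p ≤ 1) (hb : ∀ᵐ x ∂(volume.restrict (Ioi 0)), plow p ≤ p x ∧ p x ≤ q x)
    (hω₁ : ∀ᵐ x ∂(volume.restrict (Ioi 0)), 0 < ω₁ x) (hf0 : ∀ x ∈ Ioi (0 : ℝ), 0 ≤ f x)
    (hf : AntitoneOn f (Ioi 0)) {B M : ℝ≥0∞} (hB : dualHardyWeightNorm p q ω₁ ω₂ < B)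
    (hB' : B ≠ ⊤) (hM : NE (Ioi 0) p (fun x => ENNReal.ofReal (|f x| * ω₁ x)) < M)
    (hM' : M ≠ ⊤) :
    NE (Ioi 0) q (fun x => ENNReal.ofReal (ω₂ x) * HopDual f x) ≤
      ENNReal.ofReal (2 ^ (4 / plow p)) * B * M := by
  set s := plow p
  set Λ := ENNReal.ofReal (2 ^ (4 / s)) * B * M
  have hΛ : Λ ≠ 0 :=
    mul_ne_zero (mul_ne_zero (ofReal_pos.2 (by positivity)).ne' (pos_of_gt hB).ne')
      (pos_of_gt hM).ne'
  set θ := fun x => q x / s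
  have hqθ (x : ℝ) : q x = s * θ x := (mul_div_cancel₀ _ hpl.ne').symm
  have hθ : ∀ᵐ x ∂(volume.restrict (Ioi 0)), 1 ≤ θ x := by
    filter_upwards [hb] with x hx
    exact (one_le_div hpl).2 (hx.1.trans hx.2)
  have he (t : ℝ) : (4 : ℝ≥0∞)⁻¹ * ENNReal.ofReal (Real.exp (-t)) ≠ 0 := by
    simp [Real.exp_pos]
  refine NE_le_of_lintegral_le_one (pos_iff_ne_zero.2 hΛ) ?_
  calc ∫⁻ x in Ioi 0, (ENNReal.ofReal (ω₂ x) * HopDual f x / Λ) ^ q x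
      ≤ ∫⁻ x in Ioi 0, (∫⁻ t in Ioi 0, dualHardyMajorant s ω₂ f Λ (x, t)) ^ θ x := by
        refine lintegral_mono_ae ?_
        filter_upwards [hθ, ae_restrict_mem measurableSet_Ioi] with x hx hx0
        rw [hqθ, rpow_mul]
        exact rpow_le_rpow (rpow_mul_HopDual_div_le hf hpl hpl1 Λ hx0) (by linarith)
    _ ≤ 1 := lintegral_lintegral_rpow_le_one (hq.div_const s) hθ
        (measurable_dualHardyMajorant hω₂m hfm Λ)
        (Filter.Eventually.of_forall fun t => (pos_iff_ne_zero.2 (he t)).trans_le le_add_self)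
        (Filter.Eventually.of_forall fun t => lintegral_dualHardyMajorant_div_rpow_le_one hpl hqθ
          (hθ.mono fun x hx => zero_lt_one.trans_le hx) hΛ t (he t))
        (lintegral_dualHardy_scale_le hp hω₁m hfm hpl (hb.mono fun x hx => hx.1) hω₁ hf0 hB hB'
          hM hM')

theorem NE_mul_HopDual_eq_zero (hq : ∀ᵐ x ∂(volume.restrict (Ioi 0)), 0 < q x)
    (hf : ∀ᵐ x ∂(volume.restrict (Ioi 0)), f x = 0) :
    NE (Ioi 0) q (fun x => ENNReal.ofReal (ω x) * HopDual f x) = 0 := by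
  refine NE_eq_zero_of_ae_eq_zero hq ?_
  filter_upwards [ae_restrict_mem measurableSet_Ioi] with x (hx : 0 < x)
  have hfx := ae_restrict_of_ae_restrict_of_subset (Ioi_subset_Ioi hx.le) hf
  rw [HopDual, lintegral_congr_ae (hfx.mono fun t ht => by rw [ht, ofReal_zero]), lintegral_zero,
    ENNReal.zero_div, mul_zero]

end DualHardy

/-- Two-weight inequality for the dual Hardy operator on nonnegative decreasing
functions (Theorem 8). -/
theorem dual_hardy_inequality_decreasing
    (p q : ℝ → ℝ) (hp : Measurable p) (hq : Measurable q)
    (hpl : 0 < essInf p (volume.restrict (Set.Ioi (0 : ℝ))))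
    (hqu : essSup q (volume.restrict (Set.Ioi (0 : ℝ))) < 1)
    (hb : ∀ᵐ x ∂(volume.restrict (Set.Ioi (0 : ℝ))),
      essInf p (volume.restrict (Set.Ioi (0 : ℝ))) ≤ p x ∧ p x ≤ q x ∧
        q x ≤ essSup q (volume.restrict (Set.Ioi (0 : ℝ)))) :
    ∃ C : ℝ, 0 < C ∧
      ∀ ω₁ ω₂ : ℝ → ℝ, Measurable ω₁ → Measurable ω₂ →
        (∀ᵐ x ∂(volume.restrict (Set.Ioi (0 : ℝ))), 0 < ω₁ x) →
        (∀ᵐ x ∂(volume.restrict (Set.Ioi (0 : ℝ))), 0 < ω₂ x) →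
        ∀ f : ℝ → ℝ, Measurable f →
          (∀ x ∈ Set.Ioi (0 : ℝ), 0 ≤ f x) →
          (∀ x ∈ Set.Ioi (0 : ℝ), ∀ y ∈ Set.Ioi (0 : ℝ), x ≤ y → f y ≤ f x) →
          IpwR (Set.Ioi 0) p ω₁ f < ∞ →
          NE (Set.Ioi 0) q (fun x => ENNReal.ofReal (ω₂ x) * HopDual f x) ≤
            ENNReal.ofReal C * dualHardyWeightNorm p q ω₁ ω₂ *
              NE (Set.Ioi 0) p (fun x => ENNReal.ofReal (|f x| * ω₁ x)) := by
  have : (ae (volume.restrict (Ioi (0 : ℝ)))).NeBot := ae_restrict_neBot.2 (by simp)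
  obtain ⟨x₀, hx₀⟩ := hb.exists
  have hpl1 : plow p ≤ 1 := hx₀.1.trans (hx₀.2.1.trans (hx₀.2.2.trans hqu.le))
  have hpb : ∀ᵐ x ∂(volume.restrict (Ioi 0)), plow p ≤ p x := hb.mono fun x hx => hx.1
  refine ⟨2 ^ (4 / plow p), by positivity, fun ω₁ ω₂ hω₁m hω₂m hω₁ _ f hfm hf0 hf hfin => ?_⟩
  set N := NE (Ioi 0) p (fun x => ENNReal.ofReal (|f x| * ω₁ x))
  rcases eq_or_ne N 0 with hN0 | hN0
  · have hg :=
      ae_eq_zero_of_NE_eq_zero hp (by fun_prop) (hpb.mono fun x hx => hpl.trans_le hx) hN0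
    rw [NE_mul_HopDual_eq_zero (hb.mono fun x hx => hpl.trans_le (hx.1.trans hx.2.1)) ?_]
    · exact zero_le
    filter_upwards [hg, hω₁] with x hx hωx
    exact abs_nonpos_iff.1 (nonpos_of_mul_nonpos_left (ofReal_eq_zero.1 hx) hωx)
  refine ENNReal.le_mul_mul_of_forall_lt (ofReal_pos.2 (by positivity)).ne' ofReal_ne_top hN0
    (NE_ne_top hpl hpb hfin.ne) fun B hB M hM hB' hM' => ?_
  exact NE_mul_HopDual_le hp hq hω₁m hω₂m hfm hpl hpl1 (hb.mono fun x hx => ⟨hx.1, hx.2.1⟩)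
    hω₁ hf0 hf hB hB' hM hM'
end
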